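/- arXiv:2202.00944 — 3 statements merged into one kernel-verified Lean document; each statement's English description precedes it below -/
import Mathlib

section
/- Let 𝔾 = (G, ∂G, E, μ, g) and 𝔾' = (G', ∂G', E', μ', g') be finite connected weighted graphs with boundary satisfying (C-1), with potentials q, q', and let ψ : ∂G → ∂G' be a bijection such that μ_z = μ'_{ψ(z)} and g_{x(z)z} = g'_{x'(ψ(z))ψ(z)} for all z ∈ ∂G, where x(z) denotes the unique interior vertex adjacent to z and x'(z') the unique interior vertex adjacent to z'. Suppose #G = #G' =: N and there exist families φ₁, …, φ_N and φ'₁, …, φ'_N of Neumann eigenfunctions, orthonormal in L²(G) and L²(G') respectively, with common eigenvalues λ_k = λ'_k and φ'_k(ψ(z)) = φ_k(z) for all z ∈ ∂G and all k. Then the Neumann-to-Dirichlet maps coincide for all energies: for every λ ∈ ℂ that is not a Neumann eigenvalue, (Λ'_λ (f ∘ ψ⁻¹))(ψ(z)) = (Λ_λ f)(z) for all f : ∂G → ℝ and z ∈ ∂G. -/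
open scoped Classical

/-- A finite weighted graph with boundary: the vertex set is the whole type `V`,
partitioned into the boundary (`bdry`) and the interior (its complement). -/
structure WGraphB (V : Type) [Fintype V] where
  bdry : V → Prop
  adj : V → V → Prop
  adj_symm : ∀ {x y}, adj x y → adj y x
  adj_irrefl : ∀ x, ¬ adj x x
  mu : V → ℝ
  mu_pos : ∀ x, 0 < mu x
  g : V → V → ℝ
  g_symm : ∀ x y, g x y = g y x
  g_pos : ∀ {x y}, adj x y → 0 < g x y
  conn : ∀ x y, Relation.ReflTransGen adj x y

namespace WGraphB

variable {V : Type} [Fintype V]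

def intr (G : WGraphB V) (x : V) : Prop := ¬ G.bdry x

noncomputable def nbrs (G : WGraphB V) (x : V) : Finset V :=
  Finset.univ.filter (fun y => G.adj x y)

/-- The weighted graph Laplacian. -/
noncomputable def lap (G : WGraphB V) (u : V → ℝ) (x : V) : ℝ :=
  (G.mu x)⁻¹ * ∑ y ∈ G.nbrs x, G.g x y * (u y - u x)

/-- The Neumann derivative at a boundary vertex. -/
noncomputable def nderiv (G : WGraphB V) (u : V → ℝ) (z : V) : ℝ :=
  (G.mu z)⁻¹ * ∑ x ∈ (G.nbrs z).filter (fun x => G.intr x), G.g x z * (u x - u z)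

/-- Walks of a given length for an adjacency relation. -/
def walkRel (adj : V → V → Prop) : ℕ → V → V → Prop
  | 0, x, y => x = y
  | n + 1, x, y => ∃ z, adj x z ∧ walkRel adj n z y

/-- The graph distance: minimal number of edges of a path joining two vertices. -/
noncomputable def gdist (G : WGraphB V) (x y : V) : ℕ :=
  sInf {n | walkRel G.adj n x y}

/-- Condition (C-1): every boundary vertex is adjacent to exactly one vertex,
and this vertex is interior. -/
def C1 (G : WGraphB V) : Prop :=
  ∀ z, G.bdry z → (∃! x, G.adj z x) ∧ ∀ x, G.adj z x → G.intr x

/-- `x₀` is an extreme point of `S` with respect to the boundary. -/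
def extremePt (G : WGraphB V) (S : Finset V) (x₀ : V) : Prop :=
  x₀ ∈ S ∧ ∃ z, G.bdry z ∧ ∀ x ∈ S, x ≠ x₀ → G.gdist x₀ z < G.gdist x z

/-- Condition (C-2): the two-points condition. -/
def C2 (G : WGraphB V) : Prop :=
  ∀ S : Finset V, (∀ x ∈ S, G.intr x) → 2 ≤ S.card →
    ∃ x₀ x₁, x₀ ≠ x₁ ∧ G.extremePt S x₀ ∧ G.extremePt S x₁

/-- The set `N(∂G)` of vertices adjacent to the boundary, together with the boundary. -/
def nbhdBdry (G : WGraphB V) : Set V := {x | G.bdry x ∨ ∃ z, G.bdry z ∧ G.adj x z}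

/-- `u` solves the Dirichlet problem `(−Δ_G + q − λ)u = 0` on the interior, `u = f` on the
boundary. -/
def IsDirSol (G : WGraphB V) (q : V → ℝ) (lam : ℝ) (f : V → ℝ) (u : V → ℝ) : Prop :=
  (∀ x, G.intr x → -(G.lap u x) + q x * u x - lam * u x = 0) ∧
    ∀ z, G.bdry z → u z = f z

/-- `lam` is a Dirichlet eigenvalue of `−Δ_G + q`. -/
def IsDirEigen (G : WGraphB V) (q : V → ℝ) (lam : ℝ) : Prop :=
  ∃ u : V → ℝ, u ≠ 0 ∧ (∀ x, G.intr x → -(G.lap u x) + q x * u x - lam * u x = 0) ∧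
    ∀ z, G.bdry z → u z = 0

end WGraphB

open WGraphB

namespace WGraphB

variable {V : Type} [Fintype V]

/-- The weighted graph Laplacian, acting on complex-valued functions. -/
noncomputable def lapC (G : WGraphB V) (u : V → ℂ) (x : V) : ℂ :=
  ((G.mu x : ℂ))⁻¹ * ∑ y ∈ G.nbrs x, (G.g x y : ℂ) * (u y - u x)

/-- The Neumann derivative at a boundary vertex, for complex-valued functions. -/
noncomputable def nderivC (G : WGraphB V) (u : V → ℂ) (z : V) : ℂ :=
  ((G.mu z : ℂ))⁻¹ * ∑ x ∈ (G.nbrs z).filter (fun x => G.intr x), (G.g x z : ℂ) * (u x - u z)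

/-- `lam` is a Neumann eigenvalue of `−Δ_G + q`. -/
def IsNeumannEigen (G : WGraphB V) (q : V → ℝ) (lam : ℂ) : Prop :=
  ∃ φ : V → ℂ, φ ≠ 0 ∧
    (∀ x, G.intr x → -(G.lapC φ x) + (q x : ℂ) * φ x - lam * φ x = 0) ∧
    ∀ z, G.bdry z → G.nderivC φ z = 0

/-- `u` solves the Neumann problem `(−Δ_G + q − λ)u = 0` on the interior with Neumann data `f`
on the boundary. -/
def IsNmSol (G : WGraphB V) (q : V → ℝ) (lam : ℂ) (f : V → ℂ) (u : V → ℂ) : Prop :=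
  (∀ x, G.intr x → -(G.lapC u x) + (q x : ℂ) * u x - lam * u x = 0) ∧
    ∀ z, G.bdry z → G.nderivC u z = f z

/-- The Neumann-to-Dirichlet map: `f` is mapped to (the boundary values of) the solution of the
Neumann problem with data `f`.  (When `lam` is not a Neumann eigenvalue, the solution exists
and is unique.) -/
noncomputable def NDmap (G : WGraphB V) (q : V → ℝ) (lam : ℂ) (f : V → ℂ) : V → ℂ :=
  if h : ∃ u, G.IsNmSol q lam f u then h.choose else 0

/-- `φ` is a (real) Neumann eigenfunction of `−Δ_G + q` with eigenvalue `lam`. -/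
def IsNmEigenfun (G : WGraphB V) (q : V → ℝ) (lam : ℝ) (φ : V → ℝ) : Prop :=
  (∀ x, G.intr x → -(G.lap φ x) + q x * φ x - lam * φ x = 0) ∧
    ∀ z, G.bdry z → G.nderiv φ z = 0

/-- The interior vertices, as a finset. -/
noncomputable def intrF (G : WGraphB V) : Finset V := Finset.univ.filter (fun x => G.intr x)

/-- The boundary vertices, as a finset. -/
noncomputable def bdryF (G : WGraphB V) : Finset V := Finset.univ.filter (fun z => G.bdry z)

/-- Orthonormality in `L²(G)` of a family of functions. -/
def Orthonormal (G : WGraphB V) {N : ℕ} (φ : Fin N → V → ℝ) : Prop :=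
  ∀ j k, (∑ x ∈ G.intrF, G.mu x * φ j x * φ k x) = if j = k then 1 else 0

end WGraphB

namespace WGraphB

variable {V : Type} [Fintype V]

-- ### auxiliary lemmas

lemma bnbr_spec (G : WGraphB V) (hC1 : G.C1) {z : V} (hz : G.bdry z) :
    ∃ x, G.adj z x ∧ G.intr x ∧ (G.nbrs z).filter (fun x => G.intr x) = {x} := by
  obtain ⟨⟨x, hx, hux⟩, hint⟩ := hC1 z hz
  refine ⟨x, hx, hint x hx, ?_⟩
  ext y
  simp only [Finset.mem_filter, Finset.mem_singleton, nbrs, Finset.mem_univ, true_and]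
  constructor
  · rintro ⟨hy, _⟩; exact hux y hy
  · rintro rfl; exact ⟨hx, hint _ hx⟩

lemma lapC_cast (G : WGraphB V) (w : V → ℝ) (x : V) :
    G.lapC (fun y => (w y : ℂ)) x = ((G.lap w x : ℝ) : ℂ) := by
  simp [lapC, lap]

lemma nderivC_cast (G : WGraphB V) (w : V → ℝ) (z : V) :
    G.nderivC (fun y => (w y : ℂ)) z = ((G.nderiv w z : ℝ) : ℂ) := by
  simp [nderivC, nderiv]

lemma mu_ne (G : WGraphB V) (x : V) : (G.mu x : ℂ) ≠ 0 := by
  exact_mod_cast (G.mu_pos x).ne'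

lemma sum_pairs (G : WGraphB V) (p r : V → Prop) (F : V → V → ℂ) :
    ∑ x ∈ Finset.univ.filter p, ∑ y ∈ (G.nbrs x).filter r, F x y
    = ∑ x ∈ Finset.univ, ∑ y ∈ Finset.univ,
        if p x ∧ G.adj x y ∧ r y then F x y else 0 := by
  rw [Finset.sum_filter]
  refine Finset.sum_congr rfl fun x _ => ?_
  rw [nbrs, Finset.filter_filter, Finset.sum_filter]
  by_cases hp : p x
  · simp [hp]
  · simp [hp]

lemma sym_sum (G : WGraphB V) (a b : V → ℂ) :
    ∑ x ∈ G.intrF, ∑ y ∈ (G.nbrs x).filter (fun y => G.intr y),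
      (G.g x y : ℂ) * (a y - a x) * b x
    = ∑ x ∈ G.intrF, ∑ y ∈ (G.nbrs x).filter (fun y => G.intr y),
      (G.g x y : ℂ) * (b y - b x) * a x := by
  set f : V → V → ℂ := fun x y =>
    if G.intr x ∧ G.adj x y ∧ G.intr y then (G.g x y : ℂ) * (a y * b x - b y * a x) else 0
    with hf
  have h2 : ∀ x y, f y x = -(f x y) := by
    intro x y
    by_cases h : G.intr x ∧ G.adj x y ∧ G.intr y
    · simp only [hf]
      rw [if_pos h, if_pos ⟨h.2.2, G.adj_symm h.2.1, h.1⟩, G.g_symm]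
      ring
    · simp only [hf]
      rw [if_neg h, if_neg (fun h' => h ⟨h'.2.2, G.adj_symm h'.2.1, h'.1⟩), neg_zero]
  have key : ∑ x ∈ Finset.univ, ∑ y ∈ Finset.univ, f x y = 0 := by
    have hS : (∑ x ∈ Finset.univ, ∑ y ∈ (Finset.univ : Finset V), f x y)
        = -(∑ x ∈ Finset.univ, ∑ y ∈ Finset.univ, f x y) := by
      calc (∑ x ∈ Finset.univ, ∑ y ∈ (Finset.univ : Finset V), f x y)
          = ∑ y ∈ Finset.univ, ∑ x ∈ (Finset.univ : Finset V), f x y := Finset.sum_comm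
        _ = ∑ y ∈ Finset.univ, ∑ x ∈ (Finset.univ : Finset V), -(f y x) := by
            refine Finset.sum_congr rfl fun y _ => Finset.sum_congr rfl fun x _ => ?_
            rw [h2]
        _ = -(∑ x ∈ Finset.univ, ∑ y ∈ Finset.univ, f x y) := by
            simp [Finset.sum_neg_distrib]
    have h2S : (2:ℂ) * (∑ x ∈ Finset.univ, ∑ y ∈ Finset.univ, f x y) = 0 := by
      linear_combination hS
    exact (mul_eq_zero.mp h2S).resolve_left two_ne_zero
  have expand : ∀ c d : V → ℂ,
      (∑ x ∈ G.intrF, ∑ y ∈ (G.nbrs x).filter (fun y => G.intr y),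
        (G.g x y : ℂ) * (c y - c x) * d x)
      = ∑ x ∈ Finset.univ, ∑ y ∈ Finset.univ,
          if G.intr x ∧ G.adj x y ∧ G.intr y then (G.g x y : ℂ) * (c y - c x) * d x else 0 := by
    intro c d
    simp only [intrF]
    exact G.sum_pairs _ _ _
  rw [expand a b, expand b a, ← sub_eq_zero, ← Finset.sum_sub_distrib]
  have hmain : (∑ x ∈ Finset.univ,
      ((∑ y ∈ Finset.univ, if G.intr x ∧ G.adj x y ∧ G.intr y then (G.g x y : ℂ) * (a y - a x) * b x else 0)
      - ∑ y ∈ Finset.univ, if G.intr x ∧ G.adj x y ∧ G.intr y then (G.g x y : ℂ) * (b y - b x) * a x else 0))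
      = ∑ x ∈ Finset.univ, ∑ y ∈ Finset.univ, f x y := by
    refine Finset.sum_congr rfl fun x _ => ?_
    rw [← Finset.sum_sub_distrib]
    refine Finset.sum_congr rfl fun y _ => ?_
    by_cases h : G.intr x ∧ G.adj x y ∧ G.intr y
    · simp only [hf, if_pos h]; ring
    · simp only [hf, if_neg h, sub_zero]
  rw [hmain, key]

lemma bdry_reindex (G : WGraphB V) (hC1 : G.C1) (F : V → ℂ) :
    ∑ x ∈ G.intrF, ∑ z ∈ (G.nbrs x).filter (fun z => G.bdry z), F z
    = ∑ z ∈ G.bdryF, F z := by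
  simp only [intrF]
  rw [G.sum_pairs _ _ (fun _ z => F z), Finset.sum_comm]
  simp only [bdryF]
  rw [Finset.sum_filter]
  refine Finset.sum_congr rfl fun z _ => ?_
  by_cases hz : G.bdry z
  · obtain ⟨x0, hadj, hint, hset⟩ := G.bnbr_spec hC1 hz
    have hset2 : Finset.univ.filter (fun x => G.intr x ∧ G.adj x z ∧ G.bdry z) = {x0} := by
      ext x
      simp only [Finset.mem_filter, Finset.mem_univ, true_and, Finset.mem_singleton]
      constructor
      · rintro ⟨hix, hax, _⟩
        have hx : x ∈ (G.nbrs z).filter (fun x => G.intr x) := by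
          simp only [nbrs, Finset.mem_filter, Finset.mem_univ, true_and]
          exact ⟨G.adj_symm hax, hix⟩
        rw [hset] at hx; simpa using hx
      · rintro rfl; exact ⟨hint, G.adj_symm hadj, hz⟩
    rw [if_pos hz, ← Finset.sum_filter, hset2, Finset.sum_singleton]
  · rw [if_neg hz]
    refine Finset.sum_eq_zero fun x _ => ?_
    rw [if_neg (by tauto)]

lemma bdry_fact (G : WGraphB V) (hC1 : G.C1) {q : V → ℝ} {lam₀ : ℂ} {f u : V → ℂ}
    (hu : G.IsNmSol q lam₀ f u) {x z : V} (hz : G.bdry z) (hix : G.intr x)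
    (hax : G.adj x z) :
    (G.g x z : ℂ) * (u z - u x) = -((G.mu z : ℂ) * f z) := by
  obtain ⟨x0, hadj, hint, hset⟩ := G.bnbr_spec hC1 hz
  have hx : x ∈ (G.nbrs z).filter (fun x => G.intr x) := by
    simp only [nbrs, Finset.mem_filter, Finset.mem_univ, true_and]
    exact ⟨G.adj_symm hax, hix⟩
  rw [hset, Finset.mem_singleton] at hx
  subst hx
  have h := hu.2 z hz
  rw [nderivC, hset, Finset.sum_singleton] at h
  have hmu := G.mu_ne z
  field_simp at h
  linear_combination -h

lemma bdry_fact_eig (G : WGraphB V) (hC1 : G.C1) {q : V → ℝ} {lamj : ℝ} {φj : V → ℝ}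
    (hφ : G.IsNmEigenfun q lamj φj) {x z : V} (hz : G.bdry z) (hix : G.intr x)
    (hax : G.adj x z) : φj z = φj x := by
  obtain ⟨x0, hadj, hint, hset⟩ := G.bnbr_spec hC1 hz
  have hx : x ∈ (G.nbrs z).filter (fun x => G.intr x) := by
    simp only [nbrs, Finset.mem_filter, Finset.mem_univ, true_and]
    exact ⟨G.adj_symm hax, hix⟩
  rw [hset, Finset.mem_singleton] at hx
  subst hx
  have h := hφ.2 z hz
  rw [nderiv, hset, Finset.sum_singleton] at h
  have hmu := (G.mu_pos z).ne'
  have hg := (G.g_pos (G.adj_symm hadj)).ne'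
  have h3 := (mul_eq_zero.mp h).resolve_left (inv_ne_zero hmu)
  have h4 := (mul_eq_zero.mp h3).resolve_left hg
  linarith

lemma coeff_eq (G : WGraphB V) (hC1 : G.C1) {q : V → ℝ} {lam₀ : ℂ} {lamj : ℝ} {φj : V → ℝ}
    (hφ : G.IsNmEigenfun q lamj φj) {f : V → ℝ} {u : V → ℂ}
    (hu : G.IsNmSol q lam₀ (fun z => (f z : ℂ)) u) :
    (lam₀ - (lamj : ℂ)) * (∑ x ∈ G.intrF, (G.mu x : ℂ) * u x * (φj x : ℂ))
    = ∑ z ∈ G.bdryF, (G.mu z : ℂ) * (f z : ℂ) * (φj z : ℂ) := by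
  set Φ : V → ℂ := fun y => ((φj y : ℝ) : ℂ) with hΦ
  have hintr : ∀ x, x ∈ G.intrF → G.intr x := by
    intro x hx; simpa [intrF] using hx
  have hfilt : ∀ x, (G.nbrs x).filter (fun y => ¬ G.bdry y)
      = (G.nbrs x).filter (fun y => G.intr y) := by
    intro x; apply Finset.filter_congr; intro y _; simp [intr]
  have hnbr : ∀ y x, y ∈ (G.nbrs x).filter (fun y => G.bdry y) → G.adj x y ∧ G.bdry y := by
    intro y x hy
    simp only [nbrs, Finset.mem_filter, Finset.mem_univ, true_and] at hy
    exact hy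
  -- split of the full neighbor sum
  have hsplit : ∀ (c : V → ℂ) (x : V), (∑ y ∈ G.nbrs x, c y)
      = (∑ y ∈ (G.nbrs x).filter (fun y => G.intr y), c y)
      + ∑ y ∈ (G.nbrs x).filter (fun y => G.bdry y), c y := by
    intro c x
    rw [← Finset.sum_filter_add_sum_filter_not (G.nbrs x) (fun y => G.bdry y), hfilt]
    ring
  -- equation A (for u)
  have eqA : ∑ x ∈ G.intrF, (∑ y ∈ G.nbrs x, (G.g x y : ℂ) * (u y - u x)) * Φ x
      = ∑ x ∈ G.intrF, (G.mu x : ℂ) * (((q x : ℂ)) - lam₀) * u x * Φ x := by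
    refine Finset.sum_congr rfl fun x hx => ?_
    have h := hu.1 x (hintr x hx)
    rw [lapC] at h
    have hmu := G.mu_ne x
    field_simp at h
    linear_combination (-(Φ x)) * h
  -- equation B (for the eigenfunction)
  have eqB : ∑ x ∈ G.intrF, (∑ y ∈ G.nbrs x, (G.g x y : ℂ) * (Φ y - Φ x)) * u x
      = ∑ x ∈ G.intrF, (G.mu x : ℂ) * (((q x : ℂ)) - (lamj : ℂ)) * Φ x * u x := by
    refine Finset.sum_congr rfl fun x hx => ?_
    have h := hφ.1 x (hintr x hx)
    rw [lap] at h
    have hmu := (G.mu_pos x).ne'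
    field_simp at h
    have h2 : ∑ y ∈ G.nbrs x, G.g x y * (φj y - φj x) = G.mu x * (q x - lamj) * φj x := by
      linear_combination -h
    have h3 : (∑ y ∈ G.nbrs x, (G.g x y : ℂ) * (Φ y - Φ x))
        = ((G.mu x : ℂ)) * (((q x : ℂ)) - (lamj : ℂ)) * Φ x := by
      have := congrArg (fun t : ℝ => (t : ℂ)) h2
      push_cast at this
      simpa [hΦ] using this
    rw [h3]
  -- boundary term for u
  have hbu : ∑ x ∈ G.intrF, (∑ z ∈ (G.nbrs x).filter (fun z => G.bdry z),
        (G.g x z : ℂ) * (u z - u x)) * Φ x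
      = -∑ z ∈ G.bdryF, (G.mu z : ℂ) * (f z : ℂ) * Φ z := by
    have step : ∀ x ∈ G.intrF, (∑ z ∈ (G.nbrs x).filter (fun z => G.bdry z),
        (G.g x z : ℂ) * (u z - u x)) * Φ x
        = ∑ z ∈ (G.nbrs x).filter (fun z => G.bdry z), -((G.mu z : ℂ) * (f z : ℂ) * Φ z) := by
      intro x hx
      rw [Finset.sum_mul]
      refine Finset.sum_congr rfl fun z hz => ?_
      obtain ⟨hax, hbz⟩ := hnbr z x hz
      have h1 := G.bdry_fact hC1 hu hbz (hintr x hx) hax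
      have h2 : φj z = φj x := G.bdry_fact_eig hC1 hφ hbz (hintr x hx) hax
      have h2' : Φ z = Φ x := by simp [hΦ, h2]
      rw [h1, ← h2']
      ring
    rw [Finset.sum_congr rfl step, G.bdry_reindex hC1]
    simp
  -- boundary term for the eigenfunction
  have hbφ : ∑ x ∈ G.intrF, (∑ z ∈ (G.nbrs x).filter (fun z => G.bdry z),
        (G.g x z : ℂ) * (Φ z - Φ x)) * u x = 0 := by
    refine Finset.sum_eq_zero fun x hx => ?_
    have : ∑ z ∈ (G.nbrs x).filter (fun z => G.bdry z), (G.g x z : ℂ) * (Φ z - Φ x) = 0 := by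
      refine Finset.sum_eq_zero fun z hz => ?_
      obtain ⟨hax, hbz⟩ := hnbr z x hz
      have h2 : φj z = φj x := G.bdry_fact_eig hC1 hφ hbz (hintr x hx) hax
      have h2' : Φ z = Φ x := by simp [hΦ, h2]
      rw [h2', sub_self, mul_zero]
    rw [this, zero_mul]
  -- rewrite A and B using the splitting
  have eqA' : (∑ x ∈ G.intrF, ∑ y ∈ (G.nbrs x).filter (fun y => G.intr y),
        (G.g x y : ℂ) * (u y - u x) * Φ x)
      + (∑ x ∈ G.intrF, (∑ z ∈ (G.nbrs x).filter (fun z => G.bdry z),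
        (G.g x z : ℂ) * (u z - u x)) * Φ x)
      = ∑ x ∈ G.intrF, (G.mu x : ℂ) * (((q x : ℂ)) - lam₀) * u x * Φ x := by
    rw [← eqA, ← Finset.sum_add_distrib]
    refine Finset.sum_congr rfl fun x _ => ?_
    rw [hsplit (fun y => (G.g x y : ℂ) * (u y - u x)) x, add_mul]
    congr 1
    rw [Finset.sum_mul]
  have eqB' : (∑ x ∈ G.intrF, ∑ y ∈ (G.nbrs x).filter (fun y => G.intr y),
        (G.g x y : ℂ) * (Φ y - Φ x) * u x)
      + (∑ x ∈ G.intrF, (∑ z ∈ (G.nbrs x).filter (fun z => G.bdry z),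
        (G.g x z : ℂ) * (Φ z - Φ x)) * u x)
      = ∑ x ∈ G.intrF, (G.mu x : ℂ) * (((q x : ℂ)) - (lamj : ℂ)) * Φ x * u x := by
    rw [← eqB, ← Finset.sum_add_distrib]
    refine Finset.sum_congr rfl fun x _ => ?_
    rw [hsplit (fun y => (G.g x y : ℂ) * (Φ y - Φ x)) x, add_mul]
    congr 1
    rw [Finset.sum_mul]
  have hsym := G.sym_sum u Φ
  -- difference of the right-hand sides
  have hdiff : (∑ x ∈ G.intrF, (G.mu x : ℂ) * (((q x : ℂ)) - lam₀) * u x * Φ x)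
      - (∑ x ∈ G.intrF, (G.mu x : ℂ) * (((q x : ℂ)) - (lamj : ℂ)) * Φ x * u x)
      = ((lamj : ℂ) - lam₀) * ∑ x ∈ G.intrF, (G.mu x : ℂ) * u x * Φ x := by
    rw [Finset.mul_sum, ← Finset.sum_sub_distrib]
    refine Finset.sum_congr rfl fun x _ => ?_
    ring
  have final : -(-∑ z ∈ G.bdryF, (G.mu z : ℂ) * (f z : ℂ) * Φ z)
      = (lam₀ - (lamj : ℂ)) * ∑ x ∈ G.intrF, (G.mu x : ℂ) * u x * Φ x := by
    linear_combination - eqA' + eqB' - hdiff + hbu - hbφ + hsym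
  rw [← final]
  simp [hΦ]

lemma eig_ne (G : WGraphB V) {q : V → ℝ} {lamj : ℝ} {φj : V → ℝ}
    (hφ : G.IsNmEigenfun q lamj φj) (hne : φj ≠ 0)
    {lam₀ : ℂ} (h : ¬ G.IsNeumannEigen q lam₀) : (lamj : ℂ) ≠ lam₀ := by
  intro he
  apply h
  refine ⟨fun y => ((φj y : ℝ) : ℂ), ?_, ?_, ?_⟩
  · intro h0
    apply hne
    funext y
    have := congrFun h0 y
    simpa using this
  · intro x hx
    rw [lapC_cast, ← he]
    have := hφ.1 x hx
    push_cast
    exact_mod_cast congrArg (fun t : ℝ => (t : ℂ)) this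
  · intro z hz
    rw [nderivC_cast, hφ.2 z hz]
    simp

lemma expansion (G : WGraphB V) {N : ℕ} (hN : N = Nat.card {x : V // G.intr x})
    (φ : Fin N → V → ℝ) (horth : G.Orthonormal φ) (u : V → ℂ) {x : V} (hx : G.intr x) :
    u x = ∑ j, (∑ y ∈ G.intrF, (G.mu y : ℂ) * u y * (φ j y : ℂ)) * (φ j x : ℂ) := by
  classical
  set W := {x : V // G.intr x} with hW
  have hsub : ∀ F : V → ℂ, ∑ y ∈ G.intrF, F y = ∑ w : W, F w := by
    intro F
    exact Finset.sum_subtype _ (by intro y; simp [intrF]) F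
  have hcard : Fintype.card W = N := by rw [hN, Nat.card_eq_fintype_card]
  set Φ : Fin N → (W → ℂ) := fun j w => ((φ j w : ℝ) : ℂ) with hΦ
  have hoC : ∀ j k, (∑ w : W, (G.mu w : ℂ) * Φ j w * Φ k w) = if j = k then 1 else 0 := by
    intro j k
    have h1 := horth j k
    have h2 := congrArg (fun t : ℝ => (t : ℂ)) h1
    push_cast at h2
    rw [hsub (fun y => (G.mu y : ℂ) * (φ j y : ℂ) * (φ k y : ℂ))] at h2
    simpa [hΦ, apply_ite (fun t : ℝ => (t : ℂ))] using h2
  have key : ∀ (d : Fin N → ℂ) (k : Fin N),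
      (∑ w : W, (G.mu w : ℂ) * (∑ i, d i * Φ i w) * Φ k w) = d k := by
    intro d k
    calc (∑ w : W, (G.mu w : ℂ) * (∑ i, d i * Φ i w) * Φ k w)
        = ∑ w : W, ∑ i, d i * ((G.mu w : ℂ) * Φ i w * Φ k w) := by
          refine Finset.sum_congr rfl fun w _ => ?_
          rw [Finset.mul_sum, Finset.sum_mul]
          refine Finset.sum_congr rfl fun i _ => by ring
      _ = ∑ i, ∑ w : W, d i * ((G.mu w : ℂ) * Φ i w * Φ k w) := Finset.sum_comm
      _ = ∑ i, d i * (if i = k then 1 else 0) := by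
          refine Finset.sum_congr rfl fun i _ => ?_
          rw [← Finset.mul_sum, hoC i k]
      _ = d k := by simp
  have li : LinearIndependent ℂ Φ := by
    rw [Fintype.linearIndependent_iff]
    intro g hg k
    have hw : ∀ w : W, (∑ i, g i * Φ i w) = 0 := by
      intro w
      have := congrFun hg w
      simpa [Finset.sum_apply] using this
    have := key g k
    rw [← this]
    refine Finset.sum_eq_zero fun w _ => ?_
    rw [hw w, mul_zero, zero_mul]
  have hpos : 0 < N := by
    rw [← hcard]
    exact Fintype.card_pos_iff.mpr ⟨⟨x, hx⟩⟩
  haveI : Nonempty (Fin N) := Fin.pos_iff_nonempty.mp hpos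
  have hrank : Fintype.card (Fin N) = Module.finrank ℂ (W → ℂ) := by
    rw [Module.finrank_pi, hcard, Fintype.card_fin]
  let B := basisOfLinearIndependentOfCardEqFinrank li hrank
  have hB : ∀ i, B i = Φ i := by
    intro i
    rw [show (B : Fin N → W → ℂ) i = Φ i from congrFun (coe_basisOfLinearIndependentOfCardEqFinrank li hrank) i]
  set uW : W → ℂ := fun w => u w with huW
  have hrepr := B.sum_repr uW
  set c : Fin N → ℂ := fun i => B.repr uW i with hc
  have hptw : ∀ w : W, uW w = ∑ i, c i * Φ i w := by
    intro w
    have := congrFun hrepr w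
    rw [← this]
    simp only [Finset.sum_apply, Pi.smul_apply, smul_eq_mul]
    refine Finset.sum_congr rfl fun i _ => ?_
    rw [hB i]
  have hcoef : ∀ k, (∑ y ∈ G.intrF, (G.mu y : ℂ) * u y * (φ k y : ℂ)) = c k := by
    intro k
    rw [hsub (fun y => (G.mu y : ℂ) * u y * (φ k y : ℂ))]
    rw [← key c k]
    refine Finset.sum_congr rfl fun w _ => ?_
    rw [← hptw w]
  have hux : u x = uW ⟨x, hx⟩ := rfl
  rw [hux, hptw ⟨x, hx⟩]
  refine Finset.sum_congr rfl fun j _ => ?_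
  rw [hcoef j]


end WGraphB

/-- Conversely, if two finite connected weighted graphs with boundary
satisfying (C-1) have equal numbers of interior vertices, matching boundary weights (via a
boundary bijection `ψ`), and admit complete orthonormal families of Neumann eigenfunctions with
common eigenvalues and matching boundary values, then their Neumann-to-Dirichlet maps coincide
for all energies. -/
theorem stmt8 {V V' : Type} [Fintype V] [Fintype V']
    (G : WGraphB V) (G' : WGraphB V') (q : V → ℝ) (q' : V' → ℝ)
    (hC1 : G.C1) (hC1' : G'.C1)
    (ψ : V → V') (hψ : Set.BijOn ψ {z | G.bdry z} {z' | G'.bdry z'})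
    (hmu : ∀ z, G.bdry z → G.mu z = G'.mu (ψ z))
    (hg : ∀ z x x', G.bdry z → G.adj z x → G.intr x →
      G'.adj (ψ z) x' → G'.intr x' → G.g x z = G'.g x' (ψ z))
    (N : ℕ) (hN : N = Nat.card {x : V // G.intr x})
    (hN' : N = Nat.card {x' : V' // G'.intr x'})
    (lam : Fin N → ℝ)
    (φ : Fin N → V → ℝ) (φ' : Fin N → V' → ℝ)
    (hphi : ∀ k, G.IsNmEigenfun q (lam k) (φ k)) (horth : G.Orthonormal φ)
    (hphi' : ∀ k, G'.IsNmEigenfun q' (lam k) (φ' k)) (horth' : G'.Orthonormal φ')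
    (hbv : ∀ k z, G.bdry z → φ' k (ψ z) = φ k z) :
    ∀ lam₀ : ℂ, ¬ G.IsNeumannEigen q lam₀ → ¬ G'.IsNeumannEigen q' lam₀ →
      ∀ (f : V → ℝ) (f' : V' → ℝ), (∀ z, G.bdry z → f' (ψ z) = f z) →
      ∀ u u', G.IsNmSol q lam₀ (fun z => (f z : ℂ)) u →
        G'.IsNmSol q' lam₀ (fun z' => (f' z' : ℂ)) u' →
      ∀ z, G.bdry z → u' (ψ z) = u z := by
  intro lam₀ hNE hNE' f f' hf u u' hu hu' z hz
  have hz' : G'.bdry (ψ z) := hψ.mapsTo hz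
  obtain ⟨x0, hadj, hint, hset⟩ := G.bnbr_spec hC1 hz
  obtain ⟨x0', hadj', hint', hset'⟩ := G'.bnbr_spec hC1' hz'
  -- boundary sums coincide
  have hB : ∀ j, (∑ w ∈ G'.bdryF, (G'.mu w : ℂ) * (f' w : ℂ) * (φ' j w : ℂ))
      = ∑ w ∈ G.bdryF, (G.mu w : ℂ) * (f w : ℂ) * (φ j w : ℂ) := by
    intro j
    refine (Finset.sum_bij (fun w _ => ψ w) ?_ ?_ ?_ ?_).symm
    · intro w hw
      have hbw : G.bdry w := by simpa [bdryF] using hw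
      simpa [bdryF] using hψ.mapsTo hbw
    · intro a ha b hb hab
      have hba : G.bdry a := by simpa [bdryF] using ha
      have hbb : G.bdry b := by simpa [bdryF] using hb
      exact hψ.injOn hba hbb hab
    · intro w' hw'
      have hbw' : G'.bdry w' := by simpa [bdryF] using hw'
      obtain ⟨w, hw, rfl⟩ := hψ.surjOn hbw'
      exact ⟨w, by simpa [bdryF] using hw, rfl⟩
    · intro w hw
      have hbw : G.bdry w := by simpa [bdryF] using hw
      rw [hmu w hbw, hf w hbw, hbv j w hbw]
  -- coefficients coincide
  have hcoef : ∀ j, (∑ y ∈ G.intrF, (G.mu y : ℂ) * u y * (φ j y : ℂ))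
      = ∑ y' ∈ G'.intrF, (G'.mu y' : ℂ) * u' y' * (φ' j y' : ℂ) := by
    intro j
    have h1 := G.coeff_eq hC1 (hphi j) hu
    have h2 := G'.coeff_eq hC1' (hphi' j) hu'
    have hφne : φ j ≠ 0 := by
      intro h0
      have := horth j j
      rw [h0] at this
      simp at this
    have hne : (lam j : ℂ) ≠ lam₀ := G.eig_ne (hphi j) hφne hNE
    have hsub : lam₀ - (lam j : ℂ) ≠ 0 := by
      intro h0
      exact hne (by linear_combination -h0)
    have := h1.trans ((hB j).symm.trans h2.symm)
    exact mul_left_cancel₀ hsub this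
  -- eigenfunction boundary-interior matching
  have hφmatch : ∀ j, ((φ' j x0' : ℝ) : ℂ) = ((φ j x0 : ℝ) : ℂ) := by
    intro j
    have e1 : φ' j (ψ z) = φ' j x0' := G'.bdry_fact_eig hC1' (hphi' j) hz' hint' (G'.adj_symm hadj')
    have e2 : φ j z = φ j x0 := G.bdry_fact_eig hC1 (hphi j) hz hint (G.adj_symm hadj)
    rw [← e1, ← e2, hbv j z hz]
  -- interior values at the attached vertices coincide
  have hintval : u' x0' = u x0 := by
    rw [G.expansion hN φ horth u hint, G'.expansion hN' φ' horth' u' hint']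
    refine Finset.sum_congr rfl fun j _ => ?_
    rw [hcoef j, hφmatch j]
  -- boundary facts
  have hfz := G.bdry_fact hC1 hu hz hint (G.adj_symm hadj)
  have hfz' := G'.bdry_fact hC1' hu' hz' hint' (G'.adj_symm hadj')
  have hgne : (G.g x0 z : ℂ) ≠ 0 := by
    exact_mod_cast (G.g_pos (G.adj_symm hadj)).ne'
  have hgeq : G.g x0 z = G'.g x0' (ψ z) := hg z x0 x0' hz hadj hint hadj' hint'
  have hmz : (G.mu z : ℂ) = (G'.mu (ψ z) : ℂ) := by exact_mod_cast hmu z hz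
  have hfz2 : (f' (ψ z) : ℂ) = (f z : ℂ) := by exact_mod_cast hf z hz
  -- conclude
  have huz : (G.g x0 z : ℂ) * u z = (G.g x0 z : ℂ) * u x0 - (G.mu z : ℂ) * (f z : ℂ) := by
    linear_combination hfz
  have huz' : (G.g x0 z : ℂ) * u' (ψ z) = (G.g x0 z : ℂ) * u' x0' - (G.mu z : ℂ) * (f z : ℂ) := by
    rw [hgeq, hmz]
    rw [← hfz2]
    linear_combination hfz'
  apply mul_left_cancel₀ hgne
  rw [huz, huz', hintval]
end

section
/- Let Γ = (𝒱, ℰ) be a finite connected metric graph with edge potentials V_e and δ-coupling constants C_v, and let λ ∈ ℂ be such that φ_{e0}(ℓ_e, λ) ≠ 0 for every edge e and such that the linear operator −Δ_{𝒱,λ} + Q_{𝒱,λ} on ℂ^{𝒱} is invertible. Then for every f̂ = {f_e} with each f_e : [0, ℓ_e] → ℂ continuous, there exists exactly one û = {û_e} with each û_e ∈ C²([0, ℓ_e]) that is continuous at the vertices, satisfies −û_e″ + V_e û_e − λ û_e = f_e on every edge, and satisfies the δ-coupling condition at every vertex; moreover its vertex values are given by û|_𝒱 = (−Δ_{𝒱,λ}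 + Q_{𝒱,λ})⁻¹ T_{𝒱,λ} f̂. -/
open scoped Classical

/-- A metric graph: a connected simple graph without loops, each edge `e` being identified
with the interval `[0, len e]`, joining the vertices `src e` (at `0`) and `dst e`
(at `len e`). -/
structure MGraph (V E : Type) where
  src : E → V
  dst : E → V
  len : E → ℝ
  len_pos : ∀ e, 0 < len e
  no_loop : ∀ e, src e ≠ dst e
  simple : ∀ e e', ({src e, dst e} : Set V) = ({src e', dst e'} : Set V) → e = e'
  conn : ∀ x y : V, Relation.ReflTransGen
    (fun a b => ∃ e, (src e = a ∧ dst e = b) ∨ (src e = b ∧ dst e = a)) x y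

namespace MGraph

variable {V E : Type}

/-- The edge `e` is incident to the vertex `v`. -/
def inc (Γ : MGraph V E) (e : E) (v : V) : Prop := Γ.src e = v ∨ Γ.dst e = v

/-- Adjacency of vertices in the underlying discrete graph. -/
def madj (Γ : MGraph V E) (x y : V) : Prop :=
  ∃ e, (Γ.src e = x ∧ Γ.dst e = y) ∨ (Γ.src e = y ∧ Γ.dst e = x)

/-- The endpoint of the edge `e` other than `v`. -/
noncomputable def other (Γ : MGraph V E) (e : E) (v : V) : V :=
  if Γ.src e = v then Γ.dst e else Γ.src e

/-- The value of the edge function `u e` at the endpoint `v` of `e`. -/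
noncomputable def valAt (Γ : MGraph V E) (u : E → ℝ → ℂ) (e : E) (v : V) : ℂ :=
  if Γ.src e = v then u e 0 else u e (Γ.len e)

/-- The outward derivative of an edge function at the endpoint `v` of `e`; here `u'` is the
family of first derivatives of the edge functions. -/
noncomputable def outd (Γ : MGraph V E) (u' : E → ℝ → ℂ) (e : E) (v : V) : ℂ :=
  if Γ.src e = v then u' e 0 else -(u' e (Γ.len e))

/-- The degree of a vertex: the number of incident edges. -/
noncomputable def deg (Γ : MGraph V E) (v : V) : ℕ := Nat.card {e : E // Γ.inc e v}

/-- `u, u'` is (the pair of an edge function and its derivative constituting) a `C²` solution of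
`−u″ + V_e u − λ u = f` on every edge. -/
def IsODESol (Γ : MGraph V E) (Vp : E → ℝ → ℝ) (lam : ℂ) (f : E → ℝ → ℂ)
    (u u' : E → ℝ → ℂ) : Prop :=
  ∀ e, (∀ z ∈ Set.Icc 0 (Γ.len e), HasDerivWithinAt (u e) (u' e z) (Set.Icc 0 (Γ.len e)) z) ∧
    (∀ z ∈ Set.Icc 0 (Γ.len e), HasDerivWithinAt (u' e)
      ((Vp e z : ℂ) * u e z - lam * u e z - f e z) (Set.Icc 0 (Γ.len e)) z)

/-- `w` is the family of vertex values of the edge function family `u`; this also encodes the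
continuity of `u` at the vertices. -/
def VertexVals (Γ : MGraph V E) (u : E → ℝ → ℂ) (w : V → ℂ) : Prop :=
  ∀ e, u e 0 = w (Γ.src e) ∧ u e (Γ.len e) = w (Γ.dst e)

/-- `φ₀, φ₀'` is the family of solutions `φ_{e0}` of `−φ″ + V_e φ = λ φ` with
`φ_{e0}(0) = 0`, `φ_{e0}'(0) = 1`, together with its derivative family. -/
def IsPhi0 (Γ : MGraph V E) (Vp : E → ℝ → ℝ) (lam : ℂ) (phi0 phi0' : E → ℝ → ℂ) : Prop :=
  ∀ e, (∀ z ∈ Set.Icc 0 (Γ.len e),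
      HasDerivWithinAt (phi0 e) (phi0' e z) (Set.Icc 0 (Γ.len e)) z) ∧
    (∀ z ∈ Set.Icc 0 (Γ.len e), HasDerivWithinAt (phi0' e)
      ((Vp e z : ℂ) * phi0 e z - lam * phi0 e z) (Set.Icc 0 (Γ.len e)) z) ∧
    phi0 e 0 = 0 ∧ phi0' e 0 = 1

/-- `φ₁, φ₁'` is the family of solutions `φ_{e1}` of `−φ″ + V_e φ = λ φ` with
`φ_{e1}(ℓ_e) = 0`, `φ_{e1}'(ℓ_e) = −1`, together with its derivative family. -/
def IsPhi1 (Γ : MGraph V E) (Vp : E → ℝ → ℝ) (lam : ℂ) (phi1 phi1' : E → ℝ → ℂ) : Prop :=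
  ∀ e, (∀ z ∈ Set.Icc 0 (Γ.len e),
      HasDerivWithinAt (phi1 e) (phi1' e z) (Set.Icc 0 (Γ.len e)) z) ∧
    (∀ z ∈ Set.Icc 0 (Γ.len e), HasDerivWithinAt (phi1' e)
      ((Vp e z : ℂ) * phi1 e z - lam * phi1 e z) (Set.Icc 0 (Γ.len e)) z) ∧
    phi1 e (Γ.len e) = 0 ∧ phi1' e (Γ.len e) = -1

end MGraph

namespace MGraph

variable {V E : Type}

/-- The δ-coupling condition `Σ_{e ∼ v} û_e'(v) = C_v û(v)` at the vertex `v` (with outward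
derivatives); `w` is the family of vertex values of `û`. -/
noncomputable def Coupling (Γ : MGraph V E) (u' : E → ℝ → ℂ) (C : V → ℝ) (w : V → ℂ)
    (v : V) : Prop :=
  (∑' e : {e : E // Γ.inc e v}, Γ.outd u' e.1 v) = (C v : ℂ) * w v

/-- The vertex operator `((−Δ_{𝒱,λ} + Q_{𝒱,λ}) w)(v)` associated with the solutions `φ_{e0}`. -/
noncomputable def vop (Γ : MGraph V E) (phi0 phi0' : E → ℝ → ℂ) (C : V → ℝ) (w : V → ℂ)
    (v : V) : ℂ :=
  -(((Γ.deg v : ℂ))⁻¹ * ∑' e : {e : E // Γ.inc e v},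
      (phi0 e.1 (Γ.len e.1))⁻¹ * w (Γ.other e.1 v))
  + (((Γ.deg v : ℂ))⁻¹ * (∑' e : {e : E // Γ.inc e v},
        phi0' e.1 (Γ.len e.1) / phi0 e.1 (Γ.len e.1))
      + (C v : ℂ) / (Γ.deg v : ℂ)) * w v

/-- The map `(T_{𝒱,λ} f̂)(v) = (1/d_v) Σ_{e ∼ v} (1/φ_{e0}(ℓ_e)) ∫₀^{ℓ_e} φ_{e0}(ℓ_e−z) f_e(z) dz`,
each incident edge being parametrized so that `v` corresponds to `0` (for an edge with
`dst e = v` this reparametrization turns the integrand into `φ_{e0}(z) f_e(z)`, using the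
symmetry of the potential). -/
noncomputable def tmap (Γ : MGraph V E) (phi0 : E → ℝ → ℂ) (f : E → ℝ → ℂ) (v : V) : ℂ :=
  ((Γ.deg v : ℂ))⁻¹ * ∑' e : {e : E // Γ.inc e v}, (phi0 e.1 (Γ.len e.1))⁻¹ *
    (if Γ.src e.1 = v then ∫ z in (0:ℝ)..(Γ.len e.1), phi0 e.1 (Γ.len e.1 - z) * f e.1 z
     else ∫ z in (0:ℝ)..(Γ.len e.1), phi0 e.1 z * f e.1 z)

end MGraph

namespace Stmt14Aux

open Set MeasureTheory intervalIntegral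

lemma ode_pair_unique {ℓ : ℝ} {Vr : ℝ → ℝ}
    (hV : ContinuousOn Vr (Set.Icc 0 ℓ)) {lam : ℂ} {p p' q q' : ℝ → ℂ}
    (hp : ∀ z ∈ Set.Icc 0 ℓ, HasDerivWithinAt p (p' z) (Set.Icc 0 ℓ) z)
    (hp' : ∀ z ∈ Set.Icc 0 ℓ, HasDerivWithinAt p' ((Vr z : ℂ) * p z - lam * p z) (Set.Icc 0 ℓ) z)
    (hq : ∀ z ∈ Set.Icc 0 ℓ, HasDerivWithinAt q (q' z) (Set.Icc 0 ℓ) z)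
    (hq' : ∀ z ∈ Set.Icc 0 ℓ, HasDerivWithinAt q' ((Vr z : ℂ) * q z - lam * q z) (Set.Icc 0 ℓ) z)
    (h0 : p 0 = q 0) (h0' : p' 0 = q' 0) :
    ∀ z ∈ Set.Icc 0 ℓ, p z = q z ∧ p' z = q' z := by
  rcases lt_or_ge ℓ 0 with hneg | hℓ0
  · intro z hz; exact absurd hz (by simp [Set.Icc_eq_empty_of_lt (by linarith : ℓ < (0:ℝ))])
  obtain ⟨B, hB⟩ := isCompact_Icc.exists_bound_of_continuousOn hV
  set c : ℝ → ℂ := fun t => (Vr (min ℓ (max 0 t)) : ℂ) - lam with hc_def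
  have hπ : ∀ t : ℝ, min ℓ (max 0 t) ∈ Set.Icc 0 ℓ := fun t =>
    ⟨le_min hℓ0 (le_max_left _ _), min_le_left _ _⟩
  have hcB : ∀ t, ‖c t‖ ≤ B + ‖lam‖ := by
    intro t
    refine (norm_sub_le _ _).trans (add_le_add ?_ le_rfl)
    simpa [Complex.norm_real] using hB _ (hπ t)
  have hct : ∀ t ∈ Set.Icc (0:ℝ) ℓ, c t = (Vr t : ℂ) - lam := by
    intro t ht
    simp [hc_def, max_eq_right ht.1, min_eq_right ht.2]
  set K : NNReal := ⟨max 1 (B + ‖lam‖), le_trans zero_le_one (le_max_left _ _)⟩ with hK_def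
  have hK1 : (1:ℝ) ≤ (K:ℝ) := le_max_left _ _
  have hK2 : B + ‖lam‖ ≤ (K:ℝ) := le_max_right _ _
  set v : ℝ → ℂ × ℂ → ℂ × ℂ := fun t x => (x.2, c t * x.1) with hv_def
  have hv : ∀ t, LipschitzOnWith K (v t) Set.univ := by
    intro t
    rw [lipschitzOnWith_iff_dist_le_mul]
    intro x _ y _
    rw [Prod.dist_eq]
    apply max_le
    · refine le_trans ?_ (le_mul_of_one_le_left dist_nonneg hK1)
      rw [Prod.dist_eq]; exact le_max_right _ _
    · have h1 : dist (c t * x.1) (c t * y.1) = ‖c t‖ * dist x.1 y.1 := by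
        rw [dist_eq_norm, dist_eq_norm, ← mul_sub, norm_mul]
      rw [h1]
      calc ‖c t‖ * dist x.1 y.1 ≤ (K:ℝ) * dist x.1 y.1 :=
            mul_le_mul_of_nonneg_right ((hcB t).trans hK2) dist_nonneg
        _ ≤ (K:ℝ) * dist x y :=
            mul_le_mul_of_nonneg_left (by rw [Prod.dist_eq]; exact le_max_left _ _) (by linarith)
  set F : ℝ → ℂ × ℂ := fun t => (p t, p' t) with hF_def
  set G : ℝ → ℂ × ℂ := fun t => (q t, q' t) with hG_def
  have hFc : ContinuousOn F (Set.Icc 0 ℓ) :=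
    ContinuousOn.prodMk (fun z hz => (hp z hz).continuousWithinAt)
      (fun z hz => (hp' z hz).continuousWithinAt)
  have hGc : ContinuousOn G (Set.Icc 0 ℓ) :=
    ContinuousOn.prodMk (fun z hz => (hq z hz).continuousWithinAt)
      (fun z hz => (hq' z hz).continuousWithinAt)
  have hF' : ∀ t ∈ Set.Ico (0:ℝ) ℓ, HasDerivWithinAt F (v t (F t)) (Set.Ici t) t := by
    intro t ht
    have h1 := (hp t (Ico_subset_Icc_self ht)).prodMk (hp' t (Ico_subset_Icc_self ht))
    have h2 : Set.Icc (0:ℝ) ℓ ∈ nhdsWithin t (Set.Ici t) := Icc_mem_nhdsGE_of_mem ht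
    have h3 := h1.mono_of_mem_nhdsWithin h2
    have : v t (F t) = (p' t, (Vr t : ℂ) * p t - lam * p t) := by
      simp [hv_def, hF_def, hct t (Ico_subset_Icc_self ht)]; ring
    rw [this]
    exact h3
  have hG' : ∀ t ∈ Set.Ico (0:ℝ) ℓ, HasDerivWithinAt G (v t (G t)) (Set.Ici t) t := by
    intro t ht
    have h1 := (hq t (Ico_subset_Icc_self ht)).prodMk (hq' t (Ico_subset_Icc_self ht))
    have h2 : Set.Icc (0:ℝ) ℓ ∈ nhdsWithin t (Set.Ici t) := Icc_mem_nhdsGE_of_mem ht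
    have h3 := h1.mono_of_mem_nhdsWithin h2
    have : v t (G t) = (q' t, (Vr t : ℂ) * q t - lam * q t) := by
      simp [hv_def, hG_def, hct t (Ico_subset_Icc_self ht)]; ring
    rw [this]
    exact h3
  have heq : Set.EqOn F G (Set.Icc 0 ℓ) :=
    ODE_solution_unique_of_mem_Icc_right (fun t _ => hv t) hFc hF' (fun _ _ => trivial) hGc hG'
      (fun _ _ => trivial) (by simp [hF_def, hG_def, Prod.ext_iff, h0, h0'])
  intro z hz
  have := heq hz
  exact ⟨congrArg Prod.fst this, congrArg Prod.snd this⟩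


section FTC
variable {ℓ : ℝ} {g : ℝ → ℂ}

lemma ftc_right (hg : ContinuousOn g (Set.Icc 0 ℓ)) {z : ℝ}
    (hz : z ∈ Set.Icc (0:ℝ) ℓ) :
    HasDerivWithinAt (fun x => ∫ t in (0:ℝ)..x, g t) (g z) (Set.Icc 0 ℓ) z := by
  haveI : Fact (z ∈ Set.Icc (0:ℝ) ℓ) := ⟨hz⟩
  refine intervalIntegral.integral_hasDerivWithinAt_right (t := Set.Icc 0 ℓ) ?_ ?_ ?_
  · exact (hg.mono (by rw [Set.uIcc_of_le hz.1]; exact Set.Icc_subset_Icc le_rfl hz.2)).intervalIntegrable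
  · exact hg.stronglyMeasurableAtFilter_nhdsWithin measurableSet_Icc z
  · exact hg z hz

lemma ftc_left (hg : ContinuousOn g (Set.Icc 0 ℓ)) {z : ℝ}
    (hz : z ∈ Set.Icc (0:ℝ) ℓ) :
    HasDerivWithinAt (fun x => ∫ t in x..ℓ, g t) (-(g z)) (Set.Icc 0 ℓ) z := by
  haveI : Fact (z ∈ Set.Icc (0:ℝ) ℓ) := ⟨hz⟩
  refine intervalIntegral.integral_hasDerivWithinAt_left (t := Set.Icc 0 ℓ) ?_ ?_ ?_
  · exact (hg.mono (by rw [Set.uIcc_of_le hz.2]; exact Set.Icc_subset_Icc hz.1 le_rfl)).intervalIntegrable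
  · exact hg.stronglyMeasurableAtFilter_nhdsWithin measurableSet_Icc z
  · exact hg z hz

end FTC

lemma edge_lemma {ℓ : ℝ} (hℓ : 0 < ℓ) {Vr : ℝ → ℝ} (hV : ContinuousOn Vr (Set.Icc 0 ℓ))
    (hVs : ∀ z ∈ Set.Icc (0:ℝ) ℓ, Vr (ℓ - z) = Vr z) {lam : ℂ} {P P' : ℝ → ℂ}
    (hP : ∀ z ∈ Set.Icc (0:ℝ) ℓ, HasDerivWithinAt P (P' z) (Set.Icc 0 ℓ) z)
    (hP' : ∀ z ∈ Set.Icc (0:ℝ) ℓ,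
      HasDerivWithinAt P' ((Vr z : ℂ) * P z - lam * P z) (Set.Icc 0 ℓ) z)
    (hP0 : P 0 = 0) (hP'0 : P' 0 = 1) (hm : P ℓ ≠ 0)
    {F : ℝ → ℂ} (hF : ContinuousOn F (Set.Icc 0 ℓ)) (a b : ℂ) :
    ∃ u u' : ℝ → ℂ,
      (∀ z ∈ Set.Icc (0:ℝ) ℓ, HasDerivWithinAt u (u' z) (Set.Icc 0 ℓ) z) ∧
      (∀ z ∈ Set.Icc (0:ℝ) ℓ,
        HasDerivWithinAt u' ((Vr z : ℂ) * u z - lam * u z - F z) (Set.Icc 0 ℓ) z) ∧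
      u 0 = b ∧ u ℓ = a ∧
      u' 0 = (P ℓ)⁻¹ * a - b * (P' ℓ / P ℓ) +
        (P ℓ)⁻¹ * ∫ z in (0:ℝ)..ℓ, P (ℓ - z) * F z ∧
      -(u' ℓ) = (P ℓ)⁻¹ * b - a * (P' ℓ / P ℓ) +
        (P ℓ)⁻¹ * ∫ z in (0:ℝ)..ℓ, P z * F z := by
  have hℓ0 : (0:ℝ) ≤ ℓ := hℓ.le
  have h0m : (0:ℝ) ∈ Set.Icc (0:ℝ) ℓ := ⟨le_rfl, hℓ0⟩
  have hℓm : ℓ ∈ Set.Icc (0:ℝ) ℓ := ⟨hℓ0, le_rfl⟩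
  set Q : ℝ → ℂ := fun z => P (ℓ - z) with hQ_def
  set Q' : ℝ → ℂ := fun z => -(P' (ℓ - z)) with hQ'_def
  have hrefl : ∀ z ∈ Set.Icc (0:ℝ) ℓ, ℓ - z ∈ Set.Icc (0:ℝ) ℓ := by
    intro z hz; exact ⟨by linarith [hz.2], by linarith [hz.1]⟩
  have hmaps : Set.MapsTo (fun z : ℝ => ℓ - z) (Set.Icc 0 ℓ) (Set.Icc 0 ℓ) := hrefl
  have hrd : ∀ z ∈ Set.Icc (0:ℝ) ℓ,
      HasDerivWithinAt (fun z : ℝ => ℓ - z) (-1) (Set.Icc 0 ℓ) z := by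
    intro z hz
    simpa using (hasDerivWithinAt_id z (Set.Icc (0:ℝ) ℓ)).const_sub ℓ
  have hQ : ∀ z ∈ Set.Icc (0:ℝ) ℓ, HasDerivWithinAt Q (Q' z) (Set.Icc 0 ℓ) z := by
    intro z hz
    have := HasDerivWithinAt.scomp z (hP _ (hrefl z hz)) (hrd z hz) hmaps
    simpa [hQ_def, hQ'_def, Function.comp_def] using this
  have hQ' : ∀ z ∈ Set.Icc (0:ℝ) ℓ,
      HasDerivWithinAt Q' ((Vr z : ℂ) * Q z - lam * Q z) (Set.Icc 0 ℓ) z := by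
    intro z hz
    have := (HasDerivWithinAt.scomp z (hP' _ (hrefl z hz)) (hrd z hz) hmaps).neg
    have h2 : -((-1 : ℝ) • ((Vr (ℓ - z) : ℂ) * P (ℓ - z) - lam * P (ℓ - z)))
        = (Vr z : ℂ) * Q z - lam * Q z := by
      rw [hVs z hz]; simp [hQ_def]
    rw [← h2]
    simpa [hQ'_def, Function.comp_def, Pi.neg_def] using this
  -- Wronskian
  have hW : ∀ z ∈ Set.Icc (0:ℝ) ℓ, P z * Q' z - P' z * Q z = -(P ℓ) := by
    set W : ℝ → ℂ := fun z => P z * Q' z - P' z * Q z with hW_def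
    have hWd : ∀ z ∈ Set.Icc (0:ℝ) ℓ, HasDerivWithinAt W 0 (Set.Icc 0 ℓ) z := by
      intro z hz
      have h1 := ((hP z hz).mul (hQ' z hz)).sub ((hP' z hz).mul (hQ z hz))
      refine h1.congr_deriv (Eq.symm ?_)
      ring
    have hWc : ContinuousOn W (Set.Icc 0 ℓ) := fun z hz => (hWd z hz).continuousWithinAt
    have hconst := constant_of_has_deriv_right_zero hWc (fun x hx =>
      (hWd x (Set.Ico_subset_Icc_self hx)).mono_of_mem_nhdsWithin (Icc_mem_nhdsGE_of_mem hx))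
    intro z hz
    have h0 : W 0 = -(P ℓ) := by
      simp [hW_def, hQ_def, hQ'_def, hP0, hP'0]
    calc P z * Q' z - P' z * Q z = W z := rfl
      _ = W 0 := hconst z hz
      _ = -(P ℓ) := h0
  have hQ0 : Q 0 = P ℓ := by simp [hQ_def]
  have hQℓ : Q ℓ = 0 := by simp [hQ_def, hP0]
  have hQ'0 : Q' 0 = -(P' ℓ) := by simp [hQ'_def]
  have hQ'ℓ : Q' ℓ = -1 := by simp [hQ'_def, hP'0]
  -- integrals
  have hPc : ContinuousOn P (Set.Icc 0 ℓ) := fun z hz => (hP z hz).continuousWithinAt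
  have hQc : ContinuousOn Q (Set.Icc 0 ℓ) := fun z hz => (hQ z hz).continuousWithinAt
  have hPF : ContinuousOn (fun t => P t * F t) (Set.Icc 0 ℓ) := hPc.mul hF
  have hQF : ContinuousOn (fun t => Q t * F t) (Set.Icc 0 ℓ) := hQc.mul hF
  set A : ℝ → ℂ := fun x => ∫ t in (0:ℝ)..x, P t * F t with hA_def
  set Bf : ℝ → ℂ := fun x => ∫ t in x..ℓ, Q t * F t with hB_def
  have hA : ∀ z ∈ Set.Icc (0:ℝ) ℓ, HasDerivWithinAt A (P z * F z) (Set.Icc 0 ℓ) z :=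
    fun z hz => ftc_right hPF hz
  have hBd : ∀ z ∈ Set.Icc (0:ℝ) ℓ, HasDerivWithinAt Bf (-(Q z * F z)) (Set.Icc 0 ℓ) z :=
    fun z hz => ftc_left hQF hz
  have hA0 : A 0 = 0 := intervalIntegral.integral_same
  have hBℓ : Bf ℓ = 0 := intervalIntegral.integral_same
  set m : ℂ := P ℓ with hm_def
  refine ⟨fun z => (a / m) * P z + (b / m) * Q z + m⁻¹ * (Q z * A z + P z * Bf z),
          fun z => (a / m) * P' z + (b / m) * Q' z + m⁻¹ * (Q' z * A z + P' z * Bf z),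
          ?_, ?_, ?_, ?_, ?_, ?_⟩
  · intro z hz
    have h1 := (((hP z hz).const_mul (a / m)).add ((hQ z hz).const_mul (b / m))).add
      ((((hQ z hz).mul (hA z hz)).add ((hP z hz).mul (hBd z hz))).const_mul m⁻¹)
    refine h1.congr_deriv (Eq.symm ?_)
    ring
  · intro z hz
    have h1 := (((hP' z hz).const_mul (a / m)).add ((hQ' z hz).const_mul (b / m))).add
      ((((hQ' z hz).mul (hA z hz)).add ((hP' z hz).mul (hBd z hz))).const_mul m⁻¹)
    refine h1.congr_deriv (Eq.symm ?_)
    have hWz : Q' z * P z - P' z * Q z = -m := by linear_combination hW z hz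
    have hmm1 : m⁻¹ * m = 1 := inv_mul_cancel₀ hm
    linear_combination (-(m⁻¹) * F z) * hWz + F z * hmm1
  · show a / m * P 0 + b / m * Q 0 + m⁻¹ * (Q 0 * A 0 + P 0 * Bf 0) = b
    rw [hP0, hQ0, hA0]
    field_simp
    ring
  · show a / m * P ℓ + b / m * Q ℓ + m⁻¹ * (Q ℓ * A ℓ + P ℓ * Bf ℓ) = a
    rw [hQℓ, hBℓ]
    show a / m * m + b / m * 0 + m⁻¹ * (0 * A ℓ + m * 0) = a
    field_simp
    ring
  · show a / m * P' 0 + b / m * Q' 0 + m⁻¹ * (Q' 0 * A 0 + P' 0 * Bf 0) =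
      m⁻¹ * a - b * (P' ℓ / m) + m⁻¹ * ∫ z in (0:ℝ)..ℓ, P (ℓ - z) * F z
    rw [hP'0, hQ'0, hA0]
    have hBf0 : Bf 0 = ∫ z in (0:ℝ)..ℓ, P (ℓ - z) * F z := rfl
    rw [hBf0]
    field_simp
    ring
  · show -(a / m * P' ℓ + b / m * Q' ℓ + m⁻¹ * (Q' ℓ * A ℓ + P' ℓ * Bf ℓ)) =
      m⁻¹ * b - a * (P' ℓ / m) + m⁻¹ * ∫ z in (0:ℝ)..ℓ, P z * F z
    rw [hQ'ℓ, hBℓ]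
    have hAℓ : A ℓ = ∫ z in (0:ℝ)..ℓ, P z * F z := rfl
    rw [hAℓ]
    field_simp
    ring


lemma edge_unique {ℓ : ℝ} (hℓ : 0 < ℓ) {Vr : ℝ → ℝ} (hV : ContinuousOn Vr (Set.Icc 0 ℓ))
    {lam : ℂ} {P P' : ℝ → ℂ}
    (hP : ∀ z ∈ Set.Icc (0:ℝ) ℓ, HasDerivWithinAt P (P' z) (Set.Icc 0 ℓ) z)
    (hP' : ∀ z ∈ Set.Icc (0:ℝ) ℓ,
      HasDerivWithinAt P' ((Vr z : ℂ) * P z - lam * P z) (Set.Icc 0 ℓ) z)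
    (hP0 : P 0 = 0) (hP'0 : P' 0 = 1) (hm : P ℓ ≠ 0)
    {F : ℝ → ℂ} {p p' q q' : ℝ → ℂ}
    (hp : ∀ z ∈ Set.Icc (0:ℝ) ℓ, HasDerivWithinAt p (p' z) (Set.Icc 0 ℓ) z)
    (hp' : ∀ z ∈ Set.Icc (0:ℝ) ℓ,
      HasDerivWithinAt p' ((Vr z : ℂ) * p z - lam * p z - F z) (Set.Icc 0 ℓ) z)
    (hq : ∀ z ∈ Set.Icc (0:ℝ) ℓ, HasDerivWithinAt q (q' z) (Set.Icc 0 ℓ) z)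
    (hq' : ∀ z ∈ Set.Icc (0:ℝ) ℓ,
      HasDerivWithinAt q' ((Vr z : ℂ) * q z - lam * q z - F z) (Set.Icc 0 ℓ) z)
    (h0 : p 0 = q 0) (hL : p ℓ = q ℓ) :
    ∀ z ∈ Set.Icc (0:ℝ) ℓ, p z = q z ∧ p' z = q' z := by
  have h0m : (0:ℝ) ∈ Set.Icc (0:ℝ) ℓ := ⟨le_rfl, hℓ.le⟩
  have hℓm : ℓ ∈ Set.Icc (0:ℝ) ℓ := ⟨hℓ.le, le_rfl⟩
  set c : ℂ := p' 0 - q' 0 with hc_def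
  have hd : ∀ z ∈ Set.Icc (0:ℝ) ℓ,
      HasDerivWithinAt (fun z => p z - q z) (p' z - q' z) (Set.Icc 0 ℓ) z :=
    fun z hz => (hp z hz).sub (hq z hz)
  have hd' : ∀ z ∈ Set.Icc (0:ℝ) ℓ,
      HasDerivWithinAt (fun z => p' z - q' z)
        ((Vr z : ℂ) * (p z - q z) - lam * (p z - q z)) (Set.Icc 0 ℓ) z := by
    intro z hz
    have := (hp' z hz).sub (hq' z hz)
    refine this.congr_deriv (Eq.symm ?_)
    ring
  have hg : ∀ z ∈ Set.Icc (0:ℝ) ℓ,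
      HasDerivWithinAt (fun z => c * P z) (c * P' z) (Set.Icc 0 ℓ) z :=
    fun z hz => (hP z hz).const_mul c
  have hg' : ∀ z ∈ Set.Icc (0:ℝ) ℓ,
      HasDerivWithinAt (fun z => c * P' z)
        ((Vr z : ℂ) * (c * P z) - lam * (c * P z)) (Set.Icc 0 ℓ) z := by
    intro z hz
    have := (hP' z hz).const_mul c
    refine this.congr_deriv (Eq.symm ?_)
    ring
  have key := ode_pair_unique hV hd hd' hg hg'
    (by simp [hP0, h0]) (by simp [hP'0, hc_def])
  have hcz : c = 0 := by
    have := (key ℓ hℓm).1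
    simp only [hL, sub_self] at this
    rcases mul_eq_zero.mp this.symm with h | h
    · exact h
    · exact absurd h hm
  intro z hz
  have h1 := (key z hz).1
  have h2 := (key z hz).2
  rw [hcz] at h1 h2
  simp only [zero_mul] at h1 h2
  exact ⟨sub_eq_zero.mp h1, sub_eq_zero.mp h2⟩


lemma coupling_iff {V E : Type} [Fintype V] [Fintype E] (Γ : MGraph V E)
    (phi0 phi0' : E → ℝ → ℂ) (C : V → ℝ) (f : E → ℝ → ℂ) (ww : V → ℂ) (uu' : E → ℝ → ℂ)
    (h0 : ∀ e, uu' e 0 = (phi0 e (Γ.len e))⁻¹ * ww (Γ.dst e)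
      - ww (Γ.src e) * (phi0' e (Γ.len e) / phi0 e (Γ.len e))
      + (phi0 e (Γ.len e))⁻¹ * ∫ z in (0:ℝ)..(Γ.len e), phi0 e (Γ.len e - z) * f e z)
    (hL : ∀ e, -(uu' e (Γ.len e)) = (phi0 e (Γ.len e))⁻¹ * ww (Γ.src e)
      - ww (Γ.dst e) * (phi0' e (Γ.len e) / phi0 e (Γ.len e))
      + (phi0 e (Γ.len e))⁻¹ * ∫ z in (0:ℝ)..(Γ.len e), phi0 e z * f e z)
    {v : V} (hdv : ((Γ.deg v : ℕ) : ℂ) ≠ 0) :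
    (Γ.Coupling uu' C ww v ↔ Γ.vop phi0 phi0' C ww v = Γ.tmap phi0 f v) := by
  have houtd : ∀ e : {e : E // Γ.inc e v}, Γ.outd uu' e.1 v =
      (phi0 e.1 (Γ.len e.1))⁻¹ * ww (Γ.other e.1 v)
      - (phi0' e.1 (Γ.len e.1) / phi0 e.1 (Γ.len e.1)) * ww v
      + (phi0 e.1 (Γ.len e.1))⁻¹ *
        (if Γ.src e.1 = v then ∫ z in (0:ℝ)..(Γ.len e.1), phi0 e.1 (Γ.len e.1 - z) * f e.1 z
         else ∫ z in (0:ℝ)..(Γ.len e.1), phi0 e.1 z * f e.1 z) := by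
    intro e
    by_cases h : Γ.src e.1 = v
    · have o1 : Γ.outd uu' e.1 v = uu' e.1 0 := by simp [MGraph.outd, h]
      have o2 : Γ.other e.1 v = Γ.dst e.1 := by simp [MGraph.other, h]
      have o3 : ww v = ww (Γ.src e.1) := by rw [h]
      rw [o1, o2, o3, h0 e.1, if_pos h]
      ring
    · have hd2 : Γ.dst e.1 = v := e.2.resolve_left h
      have o1 : Γ.outd uu' e.1 v = -(uu' e.1 (Γ.len e.1)) := by simp [MGraph.outd, h]
      have o2 : Γ.other e.1 v = Γ.src e.1 := by simp [MGraph.other, h]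
      have o3 : ww v = ww (Γ.dst e.1) := by rw [hd2]
      rw [o1, o2, o3, hL e.1, if_neg h]
      ring
  have hsum : (∑' e : {e : E // Γ.inc e v}, Γ.outd uu' e.1 v)
      = (∑' e : {e : E // Γ.inc e v}, (phi0 e.1 (Γ.len e.1))⁻¹ * ww (Γ.other e.1 v))
        - (∑' e : {e : E // Γ.inc e v}, phi0' e.1 (Γ.len e.1) / phi0 e.1 (Γ.len e.1)) * ww v
        + ∑' e : {e : E // Γ.inc e v}, (phi0 e.1 (Γ.len e.1))⁻¹ *
            (if Γ.src e.1 = v then ∫ z in (0:ℝ)..(Γ.len e.1), phi0 e.1 (Γ.len e.1 - z) * f e.1 z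
             else ∫ z in (0:ℝ)..(Γ.len e.1), phi0 e.1 z * f e.1 z) := by
    rw [tsum_fintype, tsum_fintype, tsum_fintype, tsum_fintype,
      Finset.sum_mul, ← Finset.sum_sub_distrib, ← Finset.sum_add_distrib]
    exact Finset.sum_congr rfl (fun e _ => houtd e)
  unfold MGraph.Coupling MGraph.vop MGraph.tmap
  rw [hsum]
  set d : ℂ := ((Γ.deg v : ℕ) : ℂ) with hd_def
  set s1 := ∑' e : {e : E // Γ.inc e v}, (phi0 e.1 (Γ.len e.1))⁻¹ * ww (Γ.other e.1 v) with hs1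
  set s2 := ∑' e : {e : E // Γ.inc e v}, phi0' e.1 (Γ.len e.1) / phi0 e.1 (Γ.len e.1) with hs2
  set s3 := ∑' e : {e : E // Γ.inc e v}, (phi0 e.1 (Γ.len e.1))⁻¹ *
      (if Γ.src e.1 = v then ∫ z in (0:ℝ)..(Γ.len e.1), phi0 e.1 (Γ.len e.1 - z) * f e.1 z
       else ∫ z in (0:ℝ)..(Γ.len e.1), phi0 e.1 z * f e.1 z) with hs3
  have hdd : d⁻¹ * d = 1 := inv_mul_cancel₀ hdv
  constructor
  · intro h
    linear_combination (-(d⁻¹)) * h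
  · intro h
    linear_combination (-d) * h - (s1 - s2 * ww v + s3 - (C v : ℂ) * ww v) * hdd

lemma deg_ne_zero {V E : Type} [Fintype V] [Fintype E] (Γ : MGraph V E)
    (phi0 phi0' : E → ℝ → ℂ) (C : V → ℝ)
    (hinv : Function.Bijective (fun w : V → ℂ => fun v => Γ.vop phi0 phi0' C w v)) :
    ∀ v : V, ((Γ.deg v : ℕ) : ℂ) ≠ 0 := by
  intro v hv
  have hdeg0 : Γ.deg v = 0 := by exact_mod_cast hv
  have hempty : IsEmpty {e : E // Γ.inc e v} := by
    rcases Nat.card_eq_zero.mp hdeg0 with h | h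
    · exact h
    · exact absurd h (not_infinite_iff_finite.mpr (Finite.of_fintype _))
  have hzero : ∀ w : V → ℂ, Γ.vop phi0 phi0' C w v = 0 := by
    intro w
    unfold MGraph.vop
    rw [tsum_empty, tsum_empty, hdeg0]
    simp
  obtain ⟨w, hw⟩ := hinv.2 (fun _ => (1:ℂ))
  have h1 : Γ.vop phi0 phi0' C w v = 1 := congrFun hw v
  rw [hzero w] at h1
  exact zero_ne_one h1

end Stmt14Aux

/-- On a finite connected metric graph, if `φ_{e0}(ℓ_e,λ) ≠ 0` for every edge
and the vertex operator `−Δ_{𝒱,λ} + Q_{𝒱,λ}` is invertible, then for every continuous `f̂` the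
problem `−û″ + V û − λ û = f̂` with continuity at the vertices and the δ-coupling condition has
exactly one solution, whose vertex values satisfy
`(−Δ_{𝒱,λ} + Q_{𝒱,λ})(û|_𝒱) = T_{𝒱,λ} f̂`. -/
theorem stmt14 {V E : Type} [Fintype V] [Fintype E]
    (Γ : MGraph V E)
    (Vp : E → ℝ → ℝ)
    (hVcont : ∀ e, ContinuousOn (Vp e) (Set.Icc 0 (Γ.len e)))
    (hVsymm : ∀ e, ∀ z ∈ Set.Icc 0 (Γ.len e), Vp e (Γ.len e - z) = Vp e z)
    (C : V → ℝ) (lam : ℂ)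
    (phi0 phi0' : E → ℝ → ℂ) (hphi0 : Γ.IsPhi0 Vp lam phi0 phi0')
    (hne : ∀ e, phi0 e (Γ.len e) ≠ 0)
    (hinv : Function.Bijective (fun w : V → ℂ => fun v => Γ.vop phi0 phi0' C w v)) :
    ∀ f : E → ℝ → ℂ, (∀ e, ContinuousOn (f e) (Set.Icc 0 (Γ.len e))) →
      ∃ (u u' : E → ℝ → ℂ) (w : V → ℂ),
        (Γ.IsODESol Vp lam f u u' ∧ Γ.VertexVals u w ∧ ∀ v, Γ.Coupling u' C w v) ∧
        (∀ v, Γ.vop phi0 phi0' C w v = Γ.tmap phi0 f v) ∧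
        ∀ (u₂ u₂' : E → ℝ → ℂ) (w₂ : V → ℂ),
          (Γ.IsODESol Vp lam f u₂ u₂' ∧ Γ.VertexVals u₂ w₂ ∧ ∀ v, Γ.Coupling u₂' C w₂ v) →
          ∀ e, ∀ z ∈ Set.Icc 0 (Γ.len e), u₂ e z = u e z := by
  intro f hf
  have hdeg := Stmt14Aux.deg_ne_zero Γ phi0 phi0' C hinv
  obtain ⟨w, hw⟩ := hinv.2 (fun v => Γ.tmap phi0 f v)
  have hw' : ∀ v, Γ.vop phi0 phi0' C w v = Γ.tmap phi0 f v := fun v => congrFun hw v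
  have h0mem : ∀ e, (0:ℝ) ∈ Set.Icc (0:ℝ) (Γ.len e) := fun e => ⟨le_rfl, (Γ.len_pos e).le⟩
  have hLmem : ∀ e, Γ.len e ∈ Set.Icc (0:ℝ) (Γ.len e) := fun e => ⟨(Γ.len_pos e).le, le_rfl⟩
  choose u u' hu1 hu2 hu3 hu4 hu5 hu6 using fun e =>
    Stmt14Aux.edge_lemma (Γ.len_pos e) (hVcont e) (hVsymm e) (hphi0 e).1 (hphi0 e).2.1
      (hphi0 e).2.2.1 (hphi0 e).2.2.2 (hne e) (hf e) (w (Γ.dst e)) (w (Γ.src e))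
  refine ⟨u, u', w, ⟨fun e => ⟨hu1 e, hu2 e⟩, fun e => ⟨hu3 e, hu4 e⟩, ?_⟩, hw', ?_⟩
  · intro v
    exact (Stmt14Aux.coupling_iff Γ phi0 phi0' C f w u'
      (fun e => hu5 e) (fun e => hu6 e) (hdeg v)).mpr (hw' v)
  · rintro u₂ u₂' w₂ ⟨hsol₂, hvv₂, hcoup₂⟩
    choose t t' ht1 ht2 ht3 ht4 ht5 ht6 using fun e =>
      Stmt14Aux.edge_lemma (Γ.len_pos e) (hVcont e) (hVsymm e) (hphi0 e).1 (hphi0 e).2.1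
        (hphi0 e).2.2.1 (hphi0 e).2.2.2 (hne e) (hf e) (w₂ (Γ.dst e)) (w₂ (Γ.src e))
    have hteq : ∀ e, ∀ z ∈ Set.Icc (0:ℝ) (Γ.len e), u₂ e z = t e z ∧ u₂' e z = t' e z :=
      fun e => Stmt14Aux.edge_unique (Γ.len_pos e) (hVcont e) (hphi0 e).1 (hphi0 e).2.1
        (hphi0 e).2.2.1 (hphi0 e).2.2.2 (hne e)
        (hsol₂ e).1 (hsol₂ e).2 (ht1 e) (ht2 e)
        (by rw [(hvv₂ e).1, ht3 e]) (by rw [(hvv₂ e).2, ht4 e])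
    have hcoup2' : ∀ v, Γ.vop phi0 phi0' C w₂ v = Γ.tmap phi0 f v := by
      intro v
      refine (Stmt14Aux.coupling_iff Γ phi0 phi0' C f w₂ u₂' ?_ ?_ (hdeg v)).mp (hcoup₂ v)
      · intro e; rw [(hteq e 0 (h0mem e)).2]; exact ht5 e
      · intro e; rw [(hteq e _ (hLmem e)).2]; exact ht6 e
    have hw₂ : w₂ = w := by
      apply hinv.1
      funext v
      show Γ.vop phi0 phi0' C w₂ v = Γ.vop phi0 phi0' C w v
      rw [hcoup2' v, hw' v]
    intro e z hz
    exact ((Stmt14Aux.edge_unique (Γ.len_pos e) (hVcont e) (hphi0 e).1 (hphi0 e).2.1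
      (hphi0 e).2.2.1 (hphi0 e).2.2.2 (hne e)
      (hsol₂ e).1 (hsol₂ e).2 (hu1 e) (hu2 e)
      (by rw [(hvv₂ e).1, hw₂, hu3 e]) (by rw [(hvv₂ e).2, hw₂, hu4 e])) z hz).1
end

section
/- Let Γ = (𝒱, ℰ) be a countable connected locally finite graph with vertex set 𝒱 ⊂ ℝ^d, all edges identified with the interval [0,1], and with the Euclidean lengths |v − w| of edges (v, w endpoints) uniformly bounded by some B > 0; for an edge e with endpoints v, w set |e_c| = |v + w|/2. Fix R > 1, κ ∈ ℝ, and λ > 0 with sin √λ ≠ 0, and set E(λ) = −cos √λ − κ sin(√λ)/√λ. Assume the discrete Rellich property for the vertex Laplacian: every w : 𝒱 → ℂ with lim_{ρ→∞} (1/ρ) Σ_{|v| < ρ} |w(v)|² = 0 that satisfies (−Δ_𝒱 − E(λ)) w (v) = 0 for all v outside some bounded subset of ℝ^d vanishes outside some (possibly larger) bounded subset. Let û = {û_e}, û_e ∈ C²([0,1]), satisfy: −û_e″ = λ û_e on every edge e with |e_c| > R; continuity at the vertices and the δ-coupling condition Σ_{e ∼ v} û_e'(v) = κ d_v û(v) at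 every vertex v all of whose incident edges e satisfy |e_c| > R; and lim_{ρ→∞} (1/ρ) Σ_{e : |e_c| < ρ} ∫₀¹ |û_e(z)|² dz = 0. Then there exists R₁ ≥ R such that û_e = 0 for every edge e with |e_c| > R₁. -/
open scoped Classical

namespace MGraph

/-- The distance from the origin of the midpoint of an edge, for a metric graph whose vertices
are points of a euclidean space. -/
noncomputable def ecMid {V E : Type} {d : ℕ} (Γ : MGraph V E)
    (pos : V → EuclideanSpace ℝ (Fin d)) (e : E) : ℝ :=
  ‖pos (Γ.src e) + pos (Γ.dst e)‖ / 2

end MGraph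


section Stmt18AuxSec
open Set Filter MeasureTheory intervalIntegral
namespace Stmt18Aux

lemma hdwa_re {f : ℝ → ℂ} {f' : ℂ} {s : Set ℝ} {x : ℝ} (h : HasDerivWithinAt f f' s x) :
    HasDerivWithinAt (fun z => (f z).re) f'.re s x := by
  simpa [Function.comp_def] using (Complex.reCLM.hasFDerivAt.comp_hasFDerivWithinAt x h.hasFDerivWithinAt).hasDerivWithinAt

lemma hdwa_im {f : ℝ → ℂ} {f' : ℂ} {s : Set ℝ} {x : ℝ} (h : HasDerivWithinAt f f' s x) :
    HasDerivWithinAt (fun z => (f z).im) f'.im s x := by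
  simpa [Function.comp_def] using (Complex.imCLM.hasFDerivAt.comp_hasFDerivWithinAt x h.hasFDerivWithinAt).hasDerivWithinAt

lemma hd_ofReal {f : ℝ → ℝ} {f' : ℝ} {x : ℝ} (h : HasDerivAt f f' x) :
    HasDerivAt (fun z => ((f z : ℝ) : ℂ)) ((f' : ℝ) : ℂ) x := by
  simpa [Function.comp_def] using (Complex.ofRealCLM.hasFDerivAt.comp x h.hasFDerivAt).hasDerivAt

lemma hd_sin' (a b x : ℝ) :
    HasDerivAt (fun z => Real.sin (a + b * z)) (b * Real.cos (a + b * x)) x := by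
  simpa [mul_comm, Function.comp_def] using
    (Real.hasDerivAt_sin (a + b * x)).comp x (((hasDerivAt_id x).const_mul b).const_add a)

lemma hd_cos' (a b x : ℝ) :
    HasDerivAt (fun z => Real.cos (a + b * z)) (-(b * Real.sin (a + b * x))) x := by
  simpa [mul_comm, Function.comp_def] using
    (Real.hasDerivAt_cos (a + b * x)).comp x (((hasDerivAt_id x).const_mul b).const_add a)

lemma hd_sin (k x : ℝ) : HasDerivAt (fun z => Real.sin (k * z)) (k * Real.cos (k * x)) x := by
  simpa [zero_add] using hd_sin' 0 k x

lemma hd_cos (k x : ℝ) : HasDerivAt (fun z => Real.cos (k * z)) (-(k * Real.sin (k * x))) x := by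
  simpa [zero_add] using hd_cos' 0 k x

lemma const_on_Icc {F : Type*} [NormedAddCommGroup F] [NormedSpace ℝ F] {f : ℝ → F} {a b : ℝ}
    (h : ∀ z ∈ Icc a b, HasDerivWithinAt f 0 (Icc a b) z) :
    ∀ z ∈ Icc a b, f z = f a := by
  have hcont : ContinuousOn f (Icc a b) := fun z hz => (h z hz).continuousWithinAt
  refine constant_of_has_deriv_right_zero hcont (fun x hx => ?_)
  exact (h x (mem_Icc_of_Ico hx)).mono_of_mem_nhdsWithin (Icc_mem_nhdsGE_of_mem hx)

/-- solution pair of `u'' = -k² u` on `[0,1]`. -/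
def IsSol (k : ℝ) (u u' : ℝ → ℂ) : Prop :=
  (∀ z ∈ Icc (0:ℝ) 1, HasDerivWithinAt u (u' z) (Icc 0 1) z) ∧
  (∀ z ∈ Icc (0:ℝ) 1, HasDerivWithinAt u' (-(k:ℂ)^2 * u z) (Icc 0 1) z)

variable {k : ℝ} {u u' : ℝ → ℂ}

theorem isSol_reverse (hsol : IsSol k u u') :
    IsSol k (fun z => u (1 - z)) (fun z => -u' (1 - z)) := by
  have hmap : MapsTo (fun z : ℝ => 1 - z) (Icc 0 1) (Icc 0 1) := by
    intro x hx
    simp only [mem_Icc] at hx ⊢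
    constructor <;> linarith [hx.1, hx.2]
  constructor <;> intro z hz
  · have h1z : (1 - z) ∈ Icc (0:ℝ) 1 := hmap hz
    have hinner : HasDerivWithinAt (fun z : ℝ => 1 - z) (-1) (Icc 0 1) z := by
      simpa using (hasDerivWithinAt_id z (Icc (0:ℝ) 1)).const_sub 1
    simpa [Function.comp_def] using HasDerivWithinAt.scomp z (hsol.1 (1 - z) h1z) hinner hmap
  · have h1z : (1 - z) ∈ Icc (0:ℝ) 1 := hmap hz
    have hinner : HasDerivWithinAt (fun z : ℝ => 1 - z) (-1) (Icc 0 1) z := by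
      simpa using (hasDerivWithinAt_id z (Icc (0:ℝ) 1)).const_sub 1
    have := (HasDerivWithinAt.scomp z (hsol.2 (1 - z) h1z) hinner hmap).neg
    refine this.congr_deriv ?_
    simp

theorem lagrange1 (hsol : IsSol k u u') :
    u' 1 * (Real.sin k : ℂ) = (k : ℂ) * (Real.cos k : ℂ) * u 1 - (k : ℂ) * u 0 := by
  set W : ℝ → ℂ := fun z =>
    u' z * (Real.sin (k * z) : ℂ) - (k : ℂ) * u z * (Real.cos (k * z) : ℂ) with hWdef
  have hWd : ∀ z ∈ Icc (0:ℝ) 1, HasDerivWithinAt W 0 (Icc 0 1) z := by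
    intro z hz
    have h1 := (hsol.2 z hz).mul (hd_ofReal (hd_sin k z)).hasDerivWithinAt
    have h2 := ((hsol.1 z hz).const_mul ((k:ℂ))).mul (hd_ofReal (hd_cos k z)).hasDerivWithinAt
    refine (h1.sub h2).congr_deriv ?_
    push_cast
    ring
  have hW := const_on_Icc hWd 1 (by norm_num)
  have h0 : W 0 = -((k:ℂ) * u 0) := by simp [hWdef]
  have h1 : W 1 = u' 1 * (Real.sin k : ℂ) - (k : ℂ) * u 1 * (Real.cos k : ℂ) := by
    simp [hWdef]
  rw [h1, h0] at hW
  linear_combination hW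

theorem lagrange2 (hsol : IsSol k u u') :
    u' 0 * (Real.sin k : ℂ) = (k : ℂ) * u 1 - (k : ℂ) * (Real.cos k : ℂ) * u 0 := by
  set W : ℝ → ℂ := fun z =>
    u' z * (Real.sin (k + (-k) * z) : ℂ) + (k : ℂ) * u z * (Real.cos (k + (-k) * z) : ℂ) with hWdef
  have hWd : ∀ z ∈ Icc (0:ℝ) 1, HasDerivWithinAt W 0 (Icc 0 1) z := by
    intro z hz
    have h1 := (hsol.2 z hz).mul (hd_ofReal (hd_sin' k (-k) z)).hasDerivWithinAt
    have h2 := ((hsol.1 z hz).const_mul ((k:ℂ))).mul (hd_ofReal (hd_cos' k (-k) z)).hasDerivWithinAt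
    refine (h1.add h2).congr_deriv ?_
    push_cast
    ring
  have hW := const_on_Icc hWd 1 (by norm_num)
  have h0 : W 0 = u' 0 * (Real.sin k : ℂ) + (k : ℂ) * u 0 * (Real.cos k : ℂ) := by
    simp [hWdef]
  have h1 : W 1 = (k:ℂ) * u 1 := by
    have : k + (-k) * 1 = 0 := by ring
    simp [hWdef, this]
  rw [h1, h0] at hW
  linear_combination -hW


theorem sol_zero (hk : 0 < k) (hs : Real.sin k ≠ 0) (hsol : IsSol k u u')
    (h0 : u 0 = 0) (h1 : u 1 = 0) : ∀ z ∈ Icc (0:ℝ) 1, u z = 0 := by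
  have hu'0 : u' 0 = 0 := by
    have h := lagrange2 hsol
    rw [h0, h1] at h
    have h2 : u' 0 * ((Real.sin k : ℝ) : ℂ) = 0 := by rw [h]; ring
    rcases mul_eq_zero.mp h2 with h' | h'
    · exact h'
    · exact absurd (Complex.ofReal_eq_zero.mp h') hs
  set F : ℝ → ℝ := fun z =>
    k^2 * ((u z).re * (u z).re + (u z).im * (u z).im)
      + ((u' z).re * (u' z).re + (u' z).im * (u' z).im) with hFdef
  have hFd : ∀ z ∈ Icc (0:ℝ) 1, HasDerivWithinAt F 0 (Icc 0 1) z := by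
    intro z hz
    have hur := hdwa_re (hsol.1 z hz)
    have hui := hdwa_im (hsol.1 z hz)
    have hvr := hdwa_re (hsol.2 z hz)
    have hvi := hdwa_im (hsol.2 z hz)
    have ecast : -(k:ℂ)^2 * u z = ((-(k^2) : ℝ) : ℂ) * u z := by push_cast; ring
    rw [ecast, Complex.re_ofReal_mul] at hvr
    rw [ecast, Complex.im_ofReal_mul] at hvi
    have H := (((hur.mul hur).add (hui.mul hui)).const_mul (k^2)).add
      ((hvr.mul hvr).add (hvi.mul hvi))
    refine H.congr_deriv ?_
    ring
  have hF := const_on_Icc hFd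
  have hF0 : F 0 = 0 := by simp [hFdef, h0, hu'0]
  intro z hz
  have hz' := hF z hz
  rw [hF0] at hz'
  simp only [hFdef] at hz'
  have hX : (u z).re * (u z).re + (u z).im * (u z).im ≤ 0 := by
    nlinarith [mul_self_nonneg ((u' z).re), mul_self_nonneg ((u' z).im), mul_pos hk hk,
      mul_self_nonneg ((u z).re), mul_self_nonneg ((u z).im)]
  have hre : (u z).re * (u z).re = 0 :=
    le_antisymm (by nlinarith [mul_self_nonneg ((u z).im)]) (mul_self_nonneg _)
  have him : (u z).im * (u z).im = 0 :=
    le_antisymm (by nlinarith [mul_self_nonneg ((u z).re)]) (mul_self_nonneg _)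
  exact Complex.ext (mul_self_eq_zero.mp hre) (mul_self_eq_zero.mp him)

theorem int_identity (hsol : IsSol k u u') :
    (k:ℂ) * u 0 + (Real.sin k : ℂ) * u 1
      = 2 * (k:ℂ) * ∫ z in (0:ℝ)..1, u z * (Real.cos (k * z) : ℂ) := by
  have h01 : (0:ℝ) ≤ 1 := by norm_num
  set φ : ℝ → ℝ := fun z => z * Real.sin (k * z) with hφdef
  set ψ : ℝ → ℝ := fun z => Real.sin (k * z) + z * (k * Real.cos (k * z)) with hψdef
  have hφd : ∀ x : ℝ, HasDerivAt φ (ψ x) x := by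
    intro x
    have := (hasDerivAt_id x).mul (hd_sin k x)
    simpa [hφdef, hψdef, Pi.mul_def] using this
  have hψd : ∀ x : ℝ, HasDerivAt ψ (2 * k * Real.cos (k * x) - k^2 * φ x) x := by
    intro x
    have := (hd_sin k x).add ((hasDerivAt_id x).mul ((hd_cos k x).const_mul k))
    refine this.congr_deriv ?_
    simp only [hφdef, id_eq]
    ring
  set G : ℝ → ℂ := fun z => u' z * (φ z : ℂ) - u z * (ψ z : ℂ) with hGdef
  have hucont : ContinuousOn u (Icc 0 1) := fun z hz => (hsol.1 z hz).continuousWithinAt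
  have hu'cont : ContinuousOn u' (Icc 0 1) := fun z hz => (hsol.2 z hz).continuousWithinAt
  have hGcont : ContinuousOn G (Icc 0 1) := by
    apply ContinuousOn.sub
    · exact hu'cont.mul ((Complex.continuous_ofReal.comp
        (by fun_prop : Continuous φ)).continuousOn)
    · exact hucont.mul ((Complex.continuous_ofReal.comp
        (by fun_prop : Continuous ψ)).continuousOn)
  have hGd : ∀ x ∈ Ioo (0:ℝ) 1, HasDerivWithinAt G
      (-(2 * (k:ℂ) * (u x * (Real.cos (k * x) : ℂ)))) (Ioi x) x := by
    intro x hx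
    have hmem : Icc (0:ℝ) 1 ∈ nhds x := Icc_mem_nhds hx.1 hx.2
    have hu := (hsol.1 x (Ioo_subset_Icc_self hx)).hasDerivAt hmem
    have hu' := (hsol.2 x (Ioo_subset_Icc_self hx)).hasDerivAt hmem
    have H := (hu'.mul (hd_ofReal (hφd x))).sub (hu.mul (hd_ofReal (hψd x)))
    refine (H.congr_deriv ?_).hasDerivWithinAt
    push_cast
    ring
  have hint : IntervalIntegrable (fun z => -(2 * (k:ℂ) * (u z * (Real.cos (k * z) : ℂ))))
      MeasureTheory.volume 0 1 := by
    apply ContinuousOn.intervalIntegrable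
    rw [uIcc_of_le h01]
    apply ContinuousOn.neg
    apply ContinuousOn.mul continuousOn_const
    exact hucont.mul ((Complex.continuous_ofReal.comp
      (by fun_prop : Continuous fun z => Real.cos (k * z))).continuousOn)
  have hftc := integral_eq_sub_of_hasDeriv_right_of_le h01 hGcont hGd hint
  have hG0 : G 0 = 0 := by simp [hGdef, hφdef, hψdef]
  have hG1 : G 1 = u' 1 * (Real.sin k : ℂ)
      - u 1 * ((Real.sin k : ℂ) + (k : ℂ) * (Real.cos k : ℂ)) := by
    simp [hGdef, hφdef, hψdef]
  rw [hG0, hG1, sub_zero] at hftc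
  have hL := lagrange1 hsol
  have hneg : ∫ z in (0:ℝ)..1, -(2 * (k:ℂ) * (u z * (Real.cos (k * z) : ℂ)))
      = -(2 * (k:ℂ) * ∫ z in (0:ℝ)..1, u z * (Real.cos (k * z) : ℂ)) := by
    rw [intervalIntegral.integral_neg, intervalIntegral.integral_const_mul]
  rw [hneg] at hftc
  linear_combination hftc + hL


theorem sq_integral_le {f : ℝ → ℝ} (hf : ContinuousOn f (Icc 0 1)) :
    (∫ z in (0:ℝ)..1, f z)^2 ≤ ∫ z in (0:ℝ)..1, (f z)^2 := by
  have h01 : (0:ℝ) ≤ 1 := by norm_num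
  have huicc : uIcc (0:ℝ) 1 = Icc 0 1 := uIcc_of_le h01
  have hf' : ContinuousOn f (uIcc (0:ℝ) 1) := huicc ▸ hf
  set c := ∫ z in (0:ℝ)..1, f z with hc
  have hif : IntervalIntegrable f volume 0 1 := hf'.intervalIntegrable
  have hif2 : IntervalIntegrable (fun z => (f z)^2) volume 0 1 := (hf'.pow 2).intervalIntegrable
  have h0 : 0 ≤ ∫ z in (0:ℝ)..1, (f z - c)^2 :=
    intervalIntegral.integral_nonneg h01 (fun x _ => sq_nonneg _)
  have hexp : ∫ z in (0:ℝ)..1, (f z - c)^2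
      = (∫ z in (0:ℝ)..1, (f z)^2) - 2*c*c + c^2 := by
    have he : ∀ z ∈ uIcc (0:ℝ) 1, (f z - c)^2 = ((f z)^2 - 2*c * f z) + c^2 := fun z _ => by ring
    rw [intervalIntegral.integral_congr he,
      intervalIntegral.integral_add (hif2.sub (hif.const_mul (2*c))) intervalIntegrable_const,
      intervalIntegral.integral_sub hif2 (hif.const_mul (2*c)),
      intervalIntegral.integral_const_mul, intervalIntegral.integral_const, ← hc]
    norm_num
  nlinarith [hexp ▸ h0]

theorem endpoint_bound (hk : 0 < k) (hsol : IsSol k u u') :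
    ‖u 0‖^2 ≤ 16*k^4/(k^2 - Real.sin k^2)^2 * ∫ z in (0:ℝ)..1, ‖u z‖^2 := by
  have h01 : (0:ℝ) ≤ 1 := by norm_num
  have huicc : uIcc (0:ℝ) 1 = Icc 0 1 := uIcc_of_le h01
  -- sin k ^ 2 < k ^ 2
  have hsup : Real.sin k < k := Real.sin_lt hk
  have hslow : -k < Real.sin k := by
    rcases le_or_gt k Real.pi with h | h
    · have := Real.sin_nonneg_of_nonneg_of_le_pi hk.le h
      linarith
    · have := Real.neg_one_le_sin k
      have := Real.pi_gt_three
      linarith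
  have hs2 : Real.sin k^2 < k^2 := sq_lt_sq' hslow hsup
  have hden : (0:ℝ) < k^2 - Real.sin k^2 := by linarith
  -- the integral and its properties
  set I := ∫ z in (0:ℝ)..1, ‖u z‖^2 with hI
  have hucont : ContinuousOn u (Icc 0 1) := fun z hz => (hsol.1 z hz).continuousWithinAt
  have hInn : 0 ≤ I := intervalIntegral.integral_nonneg h01 (fun x _ => sq_nonneg _)
  -- generic bound for solutions: ‖∫ v z cos(kz)‖ ≤ sqrt (∫ ‖v‖²)
  have key : ∀ v : ℝ → ℂ, ContinuousOn v (Icc 0 1) →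
      ‖∫ z in (0:ℝ)..1, v z * (Real.cos (k*z) : ℂ)‖ ≤ Real.sqrt (∫ z in (0:ℝ)..1, ‖v z‖^2) := by
    intro v hv
    have hnv : ContinuousOn (fun z => ‖v z‖) (Icc 0 1) := hv.norm
    have h1 : ‖∫ z in (0:ℝ)..1, v z * (Real.cos (k*z) : ℂ)‖
        ≤ ∫ z in (0:ℝ)..1, ‖v z * (Real.cos (k*z) : ℂ)‖ :=
      intervalIntegral.norm_integral_le_integral_norm h01
    have hcc : Continuous fun z : ℝ => ((Real.cos (k*z) : ℝ) : ℂ) := by fun_prop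
    have hint1 : IntervalIntegrable (fun z => ‖v z * (Real.cos (k*z) : ℂ)‖) volume 0 1 :=
      ((huicc ▸ (hv.mul hcc.continuousOn)).norm).intervalIntegrable
    have hint2 : IntervalIntegrable (fun z => ‖v z‖) volume 0 1 :=
      (huicc ▸ hnv).intervalIntegrable
    have h2 : ∫ z in (0:ℝ)..1, ‖v z * (Real.cos (k*z) : ℂ)‖ ≤ ∫ z in (0:ℝ)..1, ‖v z‖ := by
      apply intervalIntegral.integral_mono_on h01 hint1 hint2
      intro x _
      rw [norm_mul]
      have : ‖((Real.cos (k*x) : ℝ) : ℂ)‖ ≤ 1 := by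
        rw [Complex.norm_real]
        exact Real.abs_cos_le_one _
      nlinarith [norm_nonneg (v x)]
    have h3 : ∫ z in (0:ℝ)..1, ‖v z‖ ≤ Real.sqrt (∫ z in (0:ℝ)..1, ‖v z‖^2) := by
      rw [Real.le_sqrt (intervalIntegral.integral_nonneg h01 (fun x _ => norm_nonneg _))
        (intervalIntegral.integral_nonneg h01 (fun x _ => sq_nonneg _))]
      exact sq_integral_le hnv
    linarith
  -- identities
  have hA := int_identity hsol
  have hrev := isSol_reverse hsol
  have hB := int_identity hrev
  -- the reversed solution has the same L² norm
  have hIrev : (∫ z in (0:ℝ)..1, ‖u (1-z)‖^2) = I := by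
    have h := intervalIntegral.integral_comp_sub_left (a := (0:ℝ)) (b := 1) (fun z => ‖u z‖^2) 1
    simpa using h
  have hrevcont : ContinuousOn (fun z => u (1-z)) (Icc 0 1) :=
    fun z hz => (hrev.1 z hz).continuousWithinAt
  set A := ∫ z in (0:ℝ)..1, u z * (Real.cos (k*z) : ℂ) with hAdef
  set Arev := ∫ z in (0:ℝ)..1, u (1-z) * (Real.cos (k*z) : ℂ) with hArevdef
  have hAle : ‖A‖ ≤ Real.sqrt I := key u hucont
  have hBle : ‖Arev‖ ≤ Real.sqrt I := by
    have := key (fun z => u (1-z)) hrevcont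
    rw [hIrev] at this
    exact this
  -- combine: (k² - s²) u 0 = 2k² A - 2 k s Arev
  have hcomb : ((k^2 - Real.sin k^2 : ℝ) : ℂ) * u 0
      = 2*(k:ℂ)^2 * A - 2*(k:ℂ)*(Real.sin k : ℂ) * Arev := by
    have hB' : (k:ℂ) * u 1 + (Real.sin k : ℂ) * u 0 = 2 * (k:ℂ) * Arev := by
      simpa using hB
    have hcast : ((k^2 - Real.sin k^2 : ℝ) : ℂ) = (k:ℂ)^2 - (Real.sin k : ℂ)^2 := by
      push_cast
      ring
    rw [hcast]
    linear_combination (k:ℂ) * hA - (Real.sin k : ℂ) * hB'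
  have hsabs : |Real.sin k| ≤ k := by
    rw [abs_le]
    constructor <;> linarith
  have hnorm : (k^2 - Real.sin k^2) * ‖u 0‖ ≤ 4*k^2 * Real.sqrt I := by
    have h1 : ‖((k^2 - Real.sin k^2 : ℝ) : ℂ) * u 0‖ = (k^2 - Real.sin k^2) * ‖u 0‖ := by
      rw [norm_mul, Complex.norm_real, Real.norm_eq_abs, abs_of_pos hden]
    calc (k^2 - Real.sin k^2) * ‖u 0‖
        = ‖((k^2 - Real.sin k^2 : ℝ) : ℂ) * u 0‖ := h1.symm
      _ = ‖2*(k:ℂ)^2 * A - 2*(k:ℂ)*(Real.sin k : ℂ) * Arev‖ := by rw [hcomb]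
      _ ≤ ‖2*(k:ℂ)^2 * A‖ + ‖2*(k:ℂ)*(Real.sin k : ℂ) * Arev‖ := norm_sub_le _ _
      _ = 2*k^2*‖A‖ + 2*k* |Real.sin k| * ‖Arev‖ := by
          have e1 : ‖2*(k:ℂ)^2 * A‖ = 2*k^2*‖A‖ := by
            rw [norm_mul, norm_mul, norm_pow, Complex.norm_real, Real.norm_eq_abs,
              abs_of_pos hk]
            norm_num
          have e2 : ‖2*(k:ℂ)*(Real.sin k : ℂ) * Arev‖ = 2*k* |Real.sin k| * ‖Arev‖ := by
            rw [norm_mul, norm_mul, norm_mul, Complex.norm_real, Complex.norm_real,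
              Real.norm_eq_abs, Real.norm_eq_abs, abs_of_pos hk]
            norm_num
          rw [e1, e2]
      _ ≤ 4*k^2*Real.sqrt I := by
          have hint1 : |Real.sin k| * ‖Arev‖ ≤ k * Real.sqrt I :=
            mul_le_mul hsabs hBle (norm_nonneg Arev) hk.le
          have hint2 : k^2 * ‖A‖ ≤ k^2 * Real.sqrt I :=
            mul_le_mul_of_nonneg_left hAle (sq_nonneg k)
          nlinarith [hint1, hint2, hk, Real.sqrt_nonneg I]
  have hRHS : (4*k^2*Real.sqrt I)*(4*k^2*Real.sqrt I) = 16*k^4*I := by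
    calc (4*k^2*Real.sqrt I)*(4*k^2*Real.sqrt I)
        = 16*k^4*(Real.sqrt I*Real.sqrt I) := by ring
      _ = 16*k^4*I := by rw [Real.mul_self_sqrt hInn]
  have hkey : ‖u 0‖^2 * (k^2 - Real.sin k^2)^2 ≤ 16*k^4*I := by
    nlinarith [mul_self_le_mul_self (mul_nonneg hden.le (norm_nonneg (u 0))) hnorm, hRHS]
  rw [div_mul_eq_mul_div, le_div_iff₀ (by positivity)]
  linarith [hkey]


theorem endpoint_bound' (hk : 0 < k) (hsol : IsSol k u u') :
    ‖u 1‖^2 ≤ 16*k^4/(k^2 - Real.sin k^2)^2 * ∫ z in (0:ℝ)..1, ‖u z‖^2 := by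
  have h := endpoint_bound hk (isSol_reverse hsol)
  have hIrev : (∫ z in (0:ℝ)..1, ‖u (1-z)‖^2) = ∫ z in (0:ℝ)..1, ‖u z‖^2 := by
    have h2 := intervalIntegral.integral_comp_sub_left (a := (0:ℝ)) (b := 1) (fun z => ‖u z‖^2) 1
    simpa using h2
  simp only [sub_zero] at h
  rwa [hIrev] at h

end Stmt18Aux
end Stmt18AuxSec

open Filter

/-- A Rellich-type theorem for an equilateral quantum graph embedded in
`ℝ^d`: assuming the discrete Rellich property for the vertex Laplacian at the energy
`E(λ) = −cos√λ − κ sin√λ/√λ`, any family `û` solving `−û″ = λû` with the δ-coupling condition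
outside a ball of radius `R` and having vanishing `B₀^*`-norm at infinity vanishes on all edges
outside some larger ball. -/
theorem stmt18 {V E : Type} [Countable V] [Countable E] {d : ℕ}
    (Γ : MGraph V E)
    (pos : V → EuclideanSpace ℝ (Fin d)) (hposinj : Function.Injective pos)
    (hlen : ∀ e, Γ.len e = 1)
    (hlf : ∀ v : V, {e : E | Γ.inc e v}.Finite)
    (B : ℝ) (hB : 0 < B) (hbd : ∀ e, ‖pos (Γ.src e) - pos (Γ.dst e)‖ ≤ B)
    (R : ℝ) (hR : 1 < R)
    (κ : ℝ) (lam : ℝ) (hlam : 0 < lam) (hsin : Real.sin (Real.sqrt lam) ≠ 0)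
    (hRellich : ∀ w : V → ℂ,
      Tendsto (fun ρ : ℝ => ρ⁻¹ * ∑' v : V, (if ‖pos v‖ < ρ then ‖w v‖ ^ 2 else 0))
        atTop (nhds 0) →
      (∃ ρ₀ : ℝ, ∀ v, ρ₀ < ‖pos v‖ →
        -(((Γ.deg v : ℂ))⁻¹ * ∑' e : {e : E // Γ.inc e v}, w (Γ.other e.1 v))
          - ((-Real.cos (Real.sqrt lam)
              - κ * Real.sin (Real.sqrt lam) / Real.sqrt lam : ℝ) : ℂ) * w v = 0) →
      ∃ ρ₁ : ℝ, ∀ v, ρ₁ < ‖pos v‖ → w v = 0)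
    (u u' u'' : E → ℝ → ℂ)
    (hreg₁ : ∀ e, ∀ z ∈ Set.Icc (0:ℝ) 1, HasDerivWithinAt (u e) (u' e z) (Set.Icc 0 1) z)
    (hreg₂ : ∀ e, ∀ z ∈ Set.Icc (0:ℝ) 1, HasDerivWithinAt (u' e) (u'' e z) (Set.Icc 0 1) z)
    (hreg₃ : ∀ e, ContinuousOn (u'' e) (Set.Icc 0 1))
    (hode : ∀ e, R < Γ.ecMid pos e → ∀ z ∈ Set.Icc (0:ℝ) 1, u'' e z = -(lam : ℂ) * u e z)
    (hcont : ∀ v, (∀ e, Γ.inc e v → R < Γ.ecMid pos e) →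
      ∀ e e', Γ.inc e v → Γ.inc e' v → Γ.valAt u e v = Γ.valAt u e' v)
    (hcoup : ∀ v, (∀ e, Γ.inc e v → R < Γ.ecMid pos e) → ∀ e₀, Γ.inc e₀ v →
      (∑' e : {e : E // Γ.inc e v}, Γ.outd u' e.1 v)
        = ((κ * Γ.deg v : ℝ) : ℂ) * Γ.valAt u e₀ v)
    (hdecay : Tendsto (fun ρ : ℝ => ρ⁻¹ * ∑' e : E,
        (if Γ.ecMid pos e < ρ then ∫ z in (0:ℝ)..1, ‖u e z‖ ^ 2 else 0))
      atTop (nhds 0)) :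
    ∃ R₁ : ℝ, R ≤ R₁ ∧ ∀ e, R₁ < Γ.ecMid pos e → ∀ z ∈ Set.Icc (0:ℝ) 1, u e z = 0 := by
  classical
  rcases isEmpty_or_nonempty E with hE | hE
  · exact ⟨R, le_rfl, fun e => (IsEmpty.false e).elim⟩
  set k := Real.sqrt lam with hkdef
  have hk : 0 < k := Real.sqrt_pos.mpr hlam
  have hk2 : k^2 = lam := Real.sq_sqrt hlam.le
  have hsk : Real.sin k ≠ 0 := hsin
  have hkC : (k:ℂ) ≠ 0 := by exact_mod_cast hk.ne'
  have hsC : ((Real.sin k : ℝ) : ℂ) ≠ 0 := by exact_mod_cast hsk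
  -- every vertex is incident to some edge
  have hvx : ∀ v : V, ∃ e, Γ.inc e v := by
    intro v
    obtain ⟨e₀⟩ := hE
    rcases (Γ.conn v (Γ.src e₀)).cases_head with h | ⟨b, ⟨e, he⟩, _⟩
    · exact ⟨e₀, Or.inl h.symm⟩
    · rcases he with ⟨h1, _⟩ | ⟨_, h2⟩
      · exact ⟨e, Or.inl h1⟩
      · exact ⟨e, Or.inr h2⟩
  have hfinI : ∀ v : V, Finite {e : E // Γ.inc e v} := fun v => (hlf v).to_subtype
  choose ce hce1 using hvx
  set w : V → ℂ := fun v => Γ.valAt u (ce v) v with hwdef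
  -- geometry
  have hgeo : ∀ e (v : V), Γ.inc e v →
      ‖pos v‖ - B/2 ≤ Γ.ecMid pos e ∧ Γ.ecMid pos e ≤ ‖pos v‖ + B/2 := by
    intro e v hv
    have hb : ‖pos (Γ.src e) - pos (Γ.dst e)‖ ≤ B := hbd e
    have key : ∀ p q : EuclideanSpace ℝ (Fin d), ‖p - q‖ ≤ B →
        ‖p‖ - B/2 ≤ ‖p + q‖/2 ∧ ‖p + q‖/2 ≤ ‖p‖ + B/2 := by
      intro p q hpq
      have h1 : ‖p + p‖ = 2*‖p‖ := by
        rw [← two_smul ℝ p, norm_smul]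
        simp
      have e1 : (p + q) + (p - q) = p + p := by abel
      have e2 : (p + p) - (p - q) = p + q := by abel
      have hlow : ‖p + p‖ ≤ ‖p + q‖ + ‖p - q‖ := by
        rw [← e1]
        exact norm_add_le _ _
      have hup : ‖p + q‖ ≤ ‖p + p‖ + ‖p - q‖ := by
        rw [← e2]
        exact norm_sub_le _ _
      constructor <;> [linarith [hlow, h1, hpq]; linarith [hup, h1, hpq]]
    rcases hv with hsrc | hdst
    · rw [MGraph.ecMid, hsrc]
      rw [hsrc] at hb
      exact key _ _ hb
    · rw [MGraph.ecMid, hdst, show pos (Γ.src e) + pos v = pos v + pos (Γ.src e) from add_comm _ _]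
      have hb' : ‖pos v - pos (Γ.src e)‖ ≤ B := by
        rw [← hdst, norm_sub_rev]
        exact hb
      exact key _ _ hb'
  have hfarv : ∀ v : V, R + B/2 < ‖pos v‖ → ∀ e, Γ.inc e v → R < Γ.ecMid pos e := by
    intro v hv e he
    have := (hgeo e v he).1
    linarith
  have hnbr : ∀ e (v : V), Γ.inc e v → ‖pos v‖ - B ≤ ‖pos (Γ.other e v)‖ := by
    intro e v hv
    have hb : ‖pos (Γ.src e) - pos (Γ.dst e)‖ ≤ B := hbd e
    rw [MGraph.other]
    split_ifs with h
    · have h2 : ‖pos v‖ - ‖pos (Γ.dst e)‖ ≤ B := by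
        calc ‖pos v‖ - ‖pos (Γ.dst e)‖ ≤ ‖pos v - pos (Γ.dst e)‖ := norm_sub_norm_le _ _
          _ = ‖pos (Γ.src e) - pos (Γ.dst e)‖ := by rw [h]
          _ ≤ B := hb
      linarith
    · have hv' : Γ.dst e = v := hv.resolve_left h
      have h2 : ‖pos v‖ - ‖pos (Γ.src e)‖ ≤ B := by
        calc ‖pos v‖ - ‖pos (Γ.src e)‖ ≤ ‖pos v - pos (Γ.src e)‖ := norm_sub_norm_le _ _
          _ = ‖pos (Γ.dst e) - pos (Γ.src e)‖ := by rw [hv']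
          _ = ‖pos (Γ.src e) - pos (Γ.dst e)‖ := norm_sub_rev _ _
          _ ≤ B := hb
      linarith
  -- far edges carry solutions of u'' = -k² u
  have hedge : ∀ e, R < Γ.ecMid pos e → Stmt18Aux.IsSol k (u e) (u' e) := by
    intro e he
    refine ⟨hreg₁ e, fun z hz => ?_⟩
    have h := hreg₂ e z hz
    rw [hode e he z hz] at h
    have hcast : -((k:ℂ))^2 * u e z = -(lam:ℂ) * u e z := by
      have : ((k:ℝ):ℂ)^2 = ((lam:ℝ):ℂ) := by
        rw [← hk2]
        push_cast
        ring
      rw [← this]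
    rwa [← hcast] at h
  -- vertex values
  have hwval : ∀ v : V, R + B/2 < ‖pos v‖ → ∀ e, Γ.inc e v → Γ.valAt u e v = w v := by
    intro v hv e he
    exact hcont v (fun e' he' => hfarv v hv e' he') e (ce v) he (hce1 v)
  have hdegpos : ∀ v : V, 0 < Γ.deg v := by
    intro v
    haveI := hfinI v
    haveI : Nonempty {e : E // Γ.inc e v} := ⟨⟨ce v, hce1 v⟩⟩
    exact Nat.card_pos
  have hdegC : ∀ v : V, ((Γ.deg v : ℂ)) ≠ 0 := by
    intro v
    exact_mod_cast (hdegpos v).ne'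
  -- the discrete equation at far vertices
  have heq : ∀ v : V, R + 3*B/2 + 1 < ‖pos v‖ →
      -(((Γ.deg v : ℂ))⁻¹ * ∑' e : {e : E // Γ.inc e v}, w (Γ.other e.1 v))
        - ((-Real.cos k - κ * Real.sin k / k : ℝ) : ℂ) * w v = 0 := by
    intro v hv
    haveI := hfinI v
    haveI : Fintype {e : E // Γ.inc e v} := Fintype.ofFinite _
    have hvfar : R + B/2 < ‖pos v‖ := by linarith [hB]
    have hefar : ∀ e, Γ.inc e v → R < Γ.ecMid pos e := hfarv v hvfar
    have hterm : ∀ e, Γ.inc e v → Γ.outd u' e v * ((Real.sin k : ℝ) : ℂ)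
        = (k:ℂ) * w (Γ.other e v) - (k:ℂ) * ((Real.cos k : ℝ) : ℂ) * w v := by
      intro e he
      have hsol := hedge e (hefar e he)
      have hnb : R + B/2 < ‖pos (Γ.other e v)‖ := by
        have h1 := hnbr e v he
        linarith [hB]
      have hincother : Γ.inc e (Γ.other e v) := by
        rw [MGraph.other]
        split_ifs with h
        · exact Or.inr rfl
        · exact Or.inl rfl
      have hval_other : Γ.valAt u e (Γ.other e v) = w (Γ.other e v) :=
        hwval (Γ.other e v) hnb e hincother
      have hval_v : Γ.valAt u e v = w v := hwval v hvfar e he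
      by_cases hsrc : Γ.src e = v
      · have hov : Γ.other e v = Γ.dst e := by rw [MGraph.other, if_pos hsrc]
        have h0 : u e 0 = w v := by rw [← hval_v, MGraph.valAt, if_pos hsrc]
        have h1 : u e 1 = w (Γ.other e v) := by
          rw [← hval_other, hov, MGraph.valAt, if_neg (Γ.no_loop e), hlen e]
        have houtd : Γ.outd u' e v = u' e 0 := by rw [MGraph.outd, if_pos hsrc]
        rw [houtd, ← h0, ← h1]
        exact Stmt18Aux.lagrange2 hsol
      · have hov : Γ.other e v = Γ.src e := by rw [MGraph.other, if_neg hsrc]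
        have h0 : u e 0 = w (Γ.other e v) := by
          rw [← hval_other, hov, MGraph.valAt, if_pos rfl]
        have h1 : u e 1 = w v := by
          rw [← hval_v, MGraph.valAt, if_neg hsrc, hlen e]
        have houtd : Γ.outd u' e v = -(u' e 1) := by
          rw [MGraph.outd, if_neg hsrc, hlen e]
        have hlag := Stmt18Aux.lagrange1 hsol
        rw [houtd, ← h0, ← h1]
        linear_combination -hlag
    set dv := ((Γ.deg v : ℂ)) with hdv
    have hdvne : dv ≠ 0 := hdegC v
    set S := ∑' e : {e : E // Γ.inc e v}, w (Γ.other e.1 v) with hSdef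
    have hsum : (∑' e : {e : E // Γ.inc e v}, Γ.outd u' e.1 v) * ((Real.sin k : ℝ) : ℂ)
        = (k:ℂ) * S - dv * ((k:ℂ) * ((Real.cos k : ℝ):ℂ) * w v) := by
      rw [hSdef, tsum_fintype, tsum_fintype, Finset.sum_mul]
      calc ∑ e : {e : E // Γ.inc e v}, Γ.outd u' e.1 v * ((Real.sin k : ℝ) : ℂ)
          = ∑ e : {e : E // Γ.inc e v},
              ((k:ℂ) * w (Γ.other e.1 v) - (k:ℂ) * ((Real.cos k : ℝ):ℂ) * w v) :=
            Finset.sum_congr rfl (fun e _ => hterm e.1 e.2)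
        _ = (k:ℂ) * (∑ e : {e : E // Γ.inc e v}, w (Γ.other e.1 v))
              - dv * ((k:ℂ) * ((Real.cos k : ℝ):ℂ) * w v) := by
            rw [Finset.sum_sub_distrib, ← Finset.mul_sum, Finset.sum_const, Finset.card_univ,
              nsmul_eq_mul, hdv]
            simp only [MGraph.deg, Nat.card_eq_fintype_card]
    have hcoup' := hcoup v hefar (ce v) (hce1 v)
    have hwceq : Γ.valAt u (ce v) v = w v := rfl
    rw [hwceq] at hcoup'
    rw [hcoup'] at hsum
    have hcast : ((κ * (Γ.deg v : ℝ) : ℝ) : ℂ) = (κ:ℂ) * dv := by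
      rw [hdv]
      push_cast
      ring
    rw [hcast] at hsum
    have hEcast : ((-Real.cos k - κ * Real.sin k / k : ℝ) : ℂ)
        = -((Real.cos k : ℝ):ℂ) - (κ:ℂ) * ((Real.sin k : ℝ):ℂ) / (k:ℂ) := by
      push_cast
      ring
    rw [hEcast]
    field_simp
    linear_combination hsum
  -- nonnegativity of the edge integrals
  have hInt_nonneg : ∀ e, 0 ≤ ∫ z in (0:ℝ)..1, ‖u e z‖^2 := fun e =>
    intervalIntegral.integral_nonneg (by norm_num) (fun x _ => sq_nonneg _)
  -- trivial-decay helper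
  have triv : ∀ f : V → ℝ, (∀ v, 0 ≤ f v) → ∀ ρ₀ : ℝ,
      ¬ Summable (fun v : V => if ‖pos v‖ < ρ₀ then f v else 0) →
      Tendsto (fun ρ : ℝ => ρ⁻¹ * ∑' v : V, (if ‖pos v‖ < ρ then f v else 0))
        atTop (nhds 0) := by
    intro f hf ρ₀ hns
    have hev : ∀ᶠ ρ in atTop,
        ρ⁻¹ * (∑' v : V, (if ‖pos v‖ < ρ then f v else 0)) = 0 := by
      filter_upwards [eventually_ge_atTop ρ₀] with ρ hρ
      have hns' : ¬ Summable (fun v : V => if ‖pos v‖ < ρ then f v else 0) := by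
        intro hS
        apply hns
        apply hS.of_nonneg_of_le
        · intro v
          split_ifs <;> [exact hf v; exact le_rfl]
        · intro v
          by_cases h1 : ‖pos v‖ < ρ₀
          · rw [if_pos h1, if_pos (lt_of_lt_of_le h1 hρ)]
          · rw [if_neg h1]
            split_ifs <;> [exact hf v; exact le_rfl]
      rw [tsum_eq_zero_of_not_summable hns', mul_zero]
    exact Tendsto.congr' (EventuallyEq.symm hev) tendsto_const_nhds
  -- the key vanishing of the vertex function
  have key : ∃ ρ₁ : ℝ, ∀ v : V, ρ₁ < ‖pos v‖ → w v = 0 := by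
    by_cases hsumU : ∀ ρ : ℝ, Summable (fun e : E =>
        if Γ.ecMid pos e < ρ then ∫ z in (0:ℝ)..1, ‖u e z‖^2 else 0)
    · by_cases hsumw : ∀ ρ : ℝ, Summable (fun v : V => if ‖pos v‖ < ρ then ‖w v‖^2 else 0)
      · -- the genuine case
        refine hRellich w ?_ ⟨R + 3*B/2 + 1, heq⟩
        have hsup : Real.sin k < k := Real.sin_lt hk
        have hslow : -k < Real.sin k := by
          rcases le_or_gt k Real.pi with h | h
          · have := Real.sin_nonneg_of_nonneg_of_le_pi hk.le h
            linarith
          · have := Real.neg_one_le_sin k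
            have := Real.pi_gt_three
            linarith
        have hden : (0:ℝ) < k^2 - Real.sin k^2 := by nlinarith
        set C₀ : ℝ := 16*k^4/(k^2 - Real.sin k^2)^2 with hC0
        have hC0pos : 0 < C₀ := by positivity
        -- pointwise bound at far vertices
        have hpt : ∀ v : V, R + B/2 < ‖pos v‖ →
            ‖w v‖^2 ≤ C₀ * ∫ z in (0:ℝ)..1, ‖u (ce v) z‖^2 := by
          intro v hv
          have hfar : R < Γ.ecMid pos (ce v) := hfarv v hv (ce v) (hce1 v)
          have hsol := hedge (ce v) hfar
          rcases hce1 v with hsrc | hdst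
          · have h0 : w v = u (ce v) 0 := by
              rw [hwdef]
              simp only [MGraph.valAt, if_pos hsrc]
            rw [h0, hC0]
            exact Stmt18Aux.endpoint_bound hk hsol
          · have hne : ¬ (Γ.src (ce v) = v) := by
              intro h
              exact Γ.no_loop (ce v) (h.trans hdst.symm)
            have h0 : w v = u (ce v) 1 := by
              rw [hwdef]
              simp only [MGraph.valAt, if_neg hne, hlen]
            rw [h0, hC0]
            exact Stmt18Aux.endpoint_bound' hk hsol
          -- now the decay estimate
        set Rn : ℝ := R + B/2 + 1 with hRn
        set M : ℝ := ∑' v : V, (if ‖pos v‖ < Rn then ‖w v‖^2 else 0) with hM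
        set Uf : ℝ → ℝ := fun σ => ∑' e : E,
          (if Γ.ecMid pos e < σ then ∫ z in (0:ℝ)..1, ‖u e z‖^2 else 0) with hUf
        have hgE : ∀ σ : ℝ, ∀ e : E,
            0 ≤ (if Γ.ecMid pos e < σ then C₀ * ∫ z in (0:ℝ)..1, ‖u e z‖^2 else 0) := by
          intro σ e
          split_ifs
          · exact mul_nonneg hC0pos.le (hInt_nonneg e)
          · exact le_rfl
        have hsumg : ∀ σ : ℝ, Summable (fun e : E =>
            if Γ.ecMid pos e < σ then C₀ * ∫ z in (0:ℝ)..1, ‖u e z‖^2 else 0) := by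
          intro σ
          have := (hsumU σ).mul_left C₀
          refine this.congr (fun e => ?_)
          split_ifs <;> simp
        have htsumg : ∀ σ : ℝ, (∑' e : E,
            (if Γ.ecMid pos e < σ then C₀ * ∫ z in (0:ℝ)..1, ‖u e z‖^2 else 0)) = C₀ * Uf σ := by
          intro σ
          rw [hUf, ← tsum_mul_left]
          refine tsum_congr (fun e => ?_)
          split_ifs <;> simp
        have hbound : ∀ ρ : ℝ, (∑' v : V, (if ‖pos v‖ < ρ then ‖w v‖^2 else 0))
            ≤ M + 2 * (C₀ * Uf (ρ + B)) := by
          intro ρ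
          set f₂ : V → ℝ := fun v => if Rn ≤ ‖pos v‖ ∧ ‖pos v‖ < ρ then ‖w v‖^2 else 0 with hf₂
          have hf₂nn : ∀ v, 0 ≤ f₂ v := by
            intro v
            simp only [hf₂]
            split_ifs <;> [exact sq_nonneg _; exact le_rfl]
          have hf₂sum : Summable f₂ := by
            apply (hsumw ρ).of_nonneg_of_le hf₂nn
            intro v
            simp only [hf₂]
            split_ifs with h1 h2
            · exact le_rfl
            · exact absurd h1.2 h2
            · exact sq_nonneg _
            · exact le_rfl
          have hle : ∀ v : V, (if ‖pos v‖ < ρ then ‖w v‖^2 else 0)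
              ≤ (if ‖pos v‖ < Rn then ‖w v‖^2 else 0) + f₂ v := by
            intro v
            simp only [hf₂]
            by_cases h1 : ‖pos v‖ < ρ
            · by_cases h2 : ‖pos v‖ < Rn
              · rw [if_pos h1, if_pos h2]
                have : ¬ (Rn ≤ ‖pos v‖ ∧ ‖pos v‖ < ρ) := fun hc => absurd h2 (not_lt.mpr hc.1)
                rw [if_neg this]
                simp
              · rw [if_pos h1, if_neg h2, if_pos ⟨not_lt.mp h2, h1⟩]
                simp
            · rw [if_neg h1]
              have : ¬ (Rn ≤ ‖pos v‖ ∧ ‖pos v‖ < ρ) := fun hc => absurd hc.2 h1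
              rw [if_neg this]
              split_ifs <;> simp [sq_nonneg]
          have step1 : (∑' v : V, (if ‖pos v‖ < ρ then ‖w v‖^2 else 0)) ≤ M + ∑' v, f₂ v := by
            rw [hM]
            calc (∑' v : V, (if ‖pos v‖ < ρ then ‖w v‖^2 else 0))
                ≤ ∑' v : V, ((if ‖pos v‖ < Rn then ‖w v‖^2 else 0) + f₂ v) :=
                  Summable.tsum_le_tsum hle (hsumw ρ) ((hsumw Rn).add hf₂sum)
              _ = _ := Summable.tsum_add (hsumw Rn) hf₂sum
          -- bound ∑ f₂ by edge integrals, via the (≤ 2)-to-1 choice map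
          set g : E → ℝ := fun e =>
            if Γ.ecMid pos e < ρ + B then C₀ * ∫ z in (0:ℝ)..1, ‖u e z‖^2 else 0 with hg
          have hf₂g : ∀ v : V, f₂ v ≤ g (ce v) := by
            intro v
            simp only [hf₂, hg]
            split_ifs with h1 h2
            · have hvfar : R + B/2 < ‖pos v‖ := by
                rw [hRn] at h1
                linarith [h1.1]
              exact hpt v hvfar
            · exfalso
              apply h2
              have := (hgeo (ce v) v (hce1 v)).2
              have hB2 : B/2 ≤ B := by linarith
              linarith [h1.2]
            · exact mul_nonneg hC0pos.le (hInt_nonneg _)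
            · exact le_rfl
          set sV : Set V := {v : V | Γ.src (ce v) = v} with hsV
          have hinj1 : Function.Injective (fun v : sV => ce v.1) := by
            intro a b hab
            have ha : Γ.src (ce a.1) = a.1 := a.2
            have hb : Γ.src (ce b.1) = b.1 := b.2
            apply Subtype.ext
            rw [← ha, ← hb]
            simp only at hab
            rw [hab]
          have hinj2 : Function.Injective (fun v : ↥sVᶜ => ce v.1) := by
            intro a b hab
            have ha : Γ.dst (ce a.1) = a.1 := (hce1 a.1).resolve_left a.2
            have hb : Γ.dst (ce b.1) = b.1 := (hce1 b.1).resolve_left b.2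
            apply Subtype.ext
            rw [← ha, ← hb]
            simp only at hab
            rw [hab]
          have hp1 : (∑' v : sV, f₂ v.1) ≤ C₀ * Uf (ρ + B) := by
            rw [← htsumg (ρ + B)]
            exact Summable.tsum_le_tsum_of_inj _ hinj1 (fun c _ => hgE (ρ+B) c)
              (fun v => hf₂g v.1) (hf₂sum.subtype _) (hsumg (ρ+B))
          have hp2 : (∑' v : ↥sVᶜ, f₂ v.1) ≤ C₀ * Uf (ρ + B) := by
            rw [← htsumg (ρ + B)]
            exact Summable.tsum_le_tsum_of_inj _ hinj2 (fun c _ => hgE (ρ+B) c)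
              (fun v => hf₂g v.1) (hf₂sum.subtype _) (hsumg (ρ+B))
          have hsplit : (∑' v : sV, f₂ v.1) + (∑' v : ↥sVᶜ, f₂ v.1) = ∑' v, f₂ v :=
            Summable.tsum_add_tsum_compl (hf₂sum.subtype _) (hf₂sum.subtype _)
          have : (∑' v, f₂ v) ≤ 2 * (C₀ * Uf (ρ + B)) := by
            rw [← hsplit]
            linarith [hp1, hp2]
          linarith [step1, this]
        -- pass to the limit
        have hUlim : Tendsto (fun ρ : ℝ => (ρ + B)⁻¹ * Uf (ρ + B)) atTop (nhds 0) := by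
          have hcomp : Tendsto (fun ρ : ℝ => ρ + B) atTop atTop :=
            tendsto_atTop_add_const_right atTop B tendsto_id
          exact (hdecay.comp hcomp)
        have hT : Tendsto (fun ρ : ℝ => ρ⁻¹ * Uf (ρ + B)) atTop (nhds 0) := by
          have hfac : Tendsto (fun ρ : ℝ => (1 + B * ρ⁻¹) * ((ρ + B)⁻¹ * Uf (ρ + B)))
              atTop (nhds 0) := by
            have h1 : Tendsto (fun ρ : ℝ => 1 + B * ρ⁻¹) atTop (nhds 1) := by
              have := tendsto_inv_atTop_zero (𝕜 := ℝ)
              have h2 := this.const_mul B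
              simpa using (tendsto_const_nhds (x := (1:ℝ)) (f := atTop)).add h2
            have := h1.mul hUlim
            simpa using this
          apply Tendsto.congr' _ hfac
          filter_upwards [eventually_gt_atTop (0:ℝ)] with ρ hρ
          have hρB : ρ + B ≠ 0 := by positivity
          field_simp
        have hglim : Tendsto (fun ρ : ℝ => ρ⁻¹ * M + 2 * C₀ * (ρ⁻¹ * Uf (ρ + B)))
            atTop (nhds 0) := by
          have h1 : Tendsto (fun ρ : ℝ => ρ⁻¹ * M) atTop (nhds 0) := by
            simpa using (tendsto_inv_atTop_zero (𝕜 := ℝ)).mul_const M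
          have h2 := hT.const_mul (2 * C₀)
          simpa using h1.add h2
        apply squeeze_zero' ?_ ?_ hglim
        · filter_upwards [eventually_gt_atTop (0:ℝ)] with ρ hρ
          have : 0 ≤ ∑' v : V, (if ‖pos v‖ < ρ then ‖w v‖^2 else 0) :=
            tsum_nonneg (fun v => by split_ifs <;> [exact sq_nonneg _; exact le_rfl])
          positivity
        · filter_upwards [eventually_gt_atTop (0:ℝ)] with ρ hρ
          have h1 := hbound ρ
          have h2 : ρ⁻¹ * (∑' v : V, (if ‖pos v‖ < ρ then ‖w v‖^2 else 0))
              ≤ ρ⁻¹ * (M + 2 * (C₀ * Uf (ρ + B))) :=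
            mul_le_mul_of_nonneg_left h1 (by positivity)
          calc ρ⁻¹ * (∑' v : V, (if ‖pos v‖ < ρ then ‖w v‖^2 else 0))
              ≤ ρ⁻¹ * (M + 2 * (C₀ * Uf (ρ + B))) := h2
            _ = ρ⁻¹ * M + 2 * C₀ * (ρ⁻¹ * Uf (ρ + B)) := by ring
      · -- the vertex family is not summable somewhere: trivial decay
        push_neg at hsumw
        obtain ⟨ρ₀, hρ₀⟩ := hsumw
        exact hRellich w (triv (fun v => ‖w v‖^2) (fun v => sq_nonneg _) ρ₀ hρ₀)
          ⟨R + 3*B/2 + 1, heq⟩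
    · -- the edge family is not summable somewhere: modify w inside a ball
      push_neg at hsumU
      obtain ⟨ρ₂, hρ₂⟩ := hsumU
      have hTinf : {v : V | ‖pos v‖ ≤ ρ₂ + B/2}.Infinite := by
        intro hfin
        apply hρ₂
        have hfinE : (⋃ v ∈ {v : V | ‖pos v‖ ≤ ρ₂ + B/2}, {e : E | Γ.inc e v}).Finite :=
          hfin.biUnion (fun v _ => hlf v)
        apply summable_of_ne_finset_zero (s := hfinE.toFinset)
        intro e he
        by_cases hlt : Γ.ecMid pos e < ρ₂
        · exfalso
          apply he
          rw [Set.Finite.mem_toFinset]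
          have h1 : ‖pos (Γ.src e)‖ ≤ ρ₂ + B/2 := by
            have := (hgeo e (Γ.src e) (Or.inl rfl)).1
            linarith
          exact Set.mem_biUnion h1 (Or.inl rfl : Γ.inc e (Γ.src e))
        · rw [if_neg hlt]
      set em : ℕ ↪ ↥{v : V | ‖pos v‖ ≤ ρ₂ + B/2} := Set.Infinite.natEmbedding _ hTinf with hem
      set ι : ℕ → V := fun n => ((em n : ↥{v : V | ‖pos v‖ ≤ ρ₂ + B/2}) : V) with hι
      have hιinj : Function.Injective ι := fun a b hab =>
        em.injective (Subtype.coe_injective hab)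
      have hιT : ∀ n, ‖pos (ι n)‖ ≤ ρ₂ + B/2 := fun n => (em n).2
      set w' : V → ℂ := fun v => if v ∈ Set.range ι then 1 else w v with hw'
      have hagree : ∀ v : V, ρ₂ + B/2 < ‖pos v‖ → w' v = w v := by
        intro v hv
        simp only [hw']
        rw [if_neg]
        rintro ⟨n, rfl⟩
        exact absurd hv (not_lt.mpr (hιT n))
      have hns : ¬ Summable (fun v : V => if ‖pos v‖ < ρ₂ + B/2 + 1 then ‖w' v‖^2 else 0) := by
        intro hS
        have hev := hS.tendsto_cofinite_zero.eventually_lt_const (zero_lt_one)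
        rw [Filter.eventually_cofinite] at hev
        have hsub : Set.range ι ⊆
            {v : V | ¬ ((if ‖pos v‖ < ρ₂ + B/2 + 1 then ‖w' v‖^2 else 0) < 1)} := by
          rintro v ⟨n, rfl⟩
          have h1 : ‖pos (ι n)‖ < ρ₂ + B/2 + 1 := lt_of_le_of_lt (hιT n) (by linarith)
          have h2 : w' (ι n) = 1 := by
            simp only [hw']
            rw [if_pos (Set.mem_range_self n)]
          simp only [Set.mem_setOf_eq, if_pos h1, h2]
          norm_num
        exact (Set.infinite_range_of_injective hιinj) (hev.subset hsub)
      have hdec' := triv (fun v => ‖w' v‖^2) (fun v => sq_nonneg _) (ρ₂ + B/2 + 1) hns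
      have heq' : ∀ v : V, max (R + 3*B/2 + 1) (ρ₂ + 3*B/2) < ‖pos v‖ →
          -(((Γ.deg v : ℂ))⁻¹ * ∑' e : {e : E // Γ.inc e v}, w' (Γ.other e.1 v))
            - ((-Real.cos k - κ * Real.sin k / k : ℝ) : ℂ) * w' v = 0 := by
        intro v hv
        rw [max_lt_iff] at hv
        have h1 := heq v hv.1
        have hwv : w' v = w v := hagree v (by linarith [hv.2, hB])
        have hothers : (∑' e : {e : E // Γ.inc e v}, w' (Γ.other e.1 v))
            = ∑' e : {e : E // Γ.inc e v}, w (Γ.other e.1 v) := by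
          refine tsum_congr (fun e => ?_)
          apply hagree
          have := hnbr e.1 v e.2
          linarith [hv.2]
        rw [hwv, hothers]
        exact h1
      obtain ⟨ρ₁', hρ₁'⟩ := hRellich w' hdec' ⟨max (R + 3*B/2 + 1) (ρ₂ + 3*B/2), heq'⟩
      refine ⟨max ρ₁' (ρ₂ + B/2), fun v hv => ?_⟩
      rw [max_lt_iff] at hv
      rw [← hagree v hv.2]
      exact hρ₁' v hv.1
  -- conclusion
  obtain ⟨ρ₁, hρ₁⟩ := key
  refine ⟨max ρ₁ (R + B/2) + B, by linarith [le_max_right ρ₁ (R + B/2), hB], fun e he z hz => ?_⟩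
  have hRfar : R < Γ.ecMid pos e := by
    have h1 := le_max_right ρ₁ (R + B/2)
    linarith [le_max_right ρ₁ (R + B/2), hB]
  have hsol := hedge e hRfar
  have hsrcfar : R + B/2 < ‖pos (Γ.src e)‖ ∧ ρ₁ < ‖pos (Γ.src e)‖ := by
    have := (hgeo e (Γ.src e) (Or.inl rfl)).2
    constructor <;> [linarith [le_max_right ρ₁ (R + B/2), hB]; linarith [le_max_left ρ₁ (R + B/2), hB]]
  have hdstfar : R + B/2 < ‖pos (Γ.dst e)‖ ∧ ρ₁ < ‖pos (Γ.dst e)‖ := by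
    have := (hgeo e (Γ.dst e) (Or.inr rfl)).2
    constructor <;> [linarith [le_max_right ρ₁ (R + B/2), hB]; linarith [le_max_left ρ₁ (R + B/2), hB]]
  have h0 : u e 0 = 0 := by
    have hval := hwval (Γ.src e) hsrcfar.1 e (Or.inl rfl)
    rw [MGraph.valAt, if_pos rfl] at hval
    rw [hval]
    exact hρ₁ _ hsrcfar.2
  have h1 : u e 1 = 0 := by
    have hval := hwval (Γ.dst e) hdstfar.1 e (Or.inr rfl)
    rw [MGraph.valAt, if_neg (Γ.no_loop e), hlen e] at hval
    rw [hval]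
    exact hρ₁ _ hdstfar.2
  exact Stmt18Aux.sol_zero hk hsk hsol h0 h1 z hz
end
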